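/- arXiv:2312.16776 — 2 statements merged into one kernel-verified Lean document; each statement's English description precedes it below -/
import Mathlib

section
/- Fix n ≥ 1, a strict partition λ with ℓ(λ) ≤ n, i ∈ [n−1], and T ∈ SetDecTab_n(λ) such that revrow(T) contains at least one i-unpaired letter equal to i. Let (x,y) be the box of T containing the last such i, and assume that changing this i to i+1 does not yield a set-valued decomposition tableau. Then none of the following occurs: (a) 1 < x ≤ y and i+1 ∈ T_{x−1,x−1}; (b) 1 < x ≤ y and some z > y has min(T_{x−1,y}) ≤ i+1 and i+1 ∈ T_{x,z}; (c) 1 < x < y and some z with 1 < z < y has max(T_{x,z}) ≥ i+1 and i+1 ∈ T_{x−1,z}. -/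
open scoped Classical

/-! ## Shifted diagrams, hook words, decomposition tableaux -/

/-- A strict partition, given as its (strictly decreasing) list of positive parts. -/
def IsStrictPartition (lam : List ℕ) : Prop :=
  lam.Chain' (· > ·) ∧ ∀ p ∈ lam, 0 < p

/-- A partition (weakly decreasing list of positive parts). -/
def IsPartition (lam : List ℕ) : Prop :=
  lam.Chain' (· ≥ ·) ∧ ∀ p ∈ lam, 0 < p

/-- `(i, j)` (1-indexed row `i`, column `j`) is a box of the shifted diagram `SD_lam`. -/
def InSD (lam : List ℕ) (i j : ℕ) : Prop :=
  1 ≤ i ∧ i ≤ lam.length ∧ i ≤ j ∧ j < i + lam.getD (i - 1) 0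

/-- `(i, j)` is a box of the (unshifted) Young diagram of `lam`. -/
def InYD (lam : List ℕ) (i j : ℕ) : Prop :=
  1 ≤ i ∧ i ≤ lam.length ∧ 1 ≤ j ∧ j ≤ lam.getD (i - 1) 0

/-- The word given by row `i` (1-indexed) of a shifted tableau `T`, read left to right. -/
def rowWord (lam : List ℕ) (T : ℕ × ℕ → ℕ) (i : ℕ) : List ℕ :=
  (List.range (lam.getD (i - 1) 0)).map fun j => T (i, i + j)

/-- A hook word: a sequence of positive integers `w₁ ≥ ⋯ ≥ w_m < w_{m+1} < ⋯ < w_n`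
for some `m ∈ [n]`. -/
def IsHookWord (w : List ℕ) : Prop :=
  (∀ v ∈ w, 0 < v) ∧
  ∃ m, 1 ≤ m ∧ m ≤ w.length ∧
    (∀ j : ℕ, j + 1 < m → w.getD (j + 1) 0 ≤ w.getD j 0) ∧
    (∀ j : ℕ, m ≤ j + 1 → j + 1 < w.length → w.getD j 0 < w.getD (j + 1) 0)

/-- `r` is a hook subword of maximal length in `s`. -/
def IsMaxHookSubwordIn (r s : List ℕ) : Prop :=
  r.Sublist s ∧ IsHookWord r ∧
    ∀ t : List ℕ, t.Sublist s → IsHookWord t → t.length ≤ r.length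

/-- A (semistandard) decomposition tableau of shifted shape `lam`. -/
def IsDecompTab (lam : List ℕ) (T : ℕ × ℕ → ℕ) : Prop :=
  (∀ i, 1 ≤ i → i ≤ lam.length → IsHookWord (rowWord lam T i)) ∧
  (∀ i, 1 ≤ i → i + 1 ≤ lam.length →
    IsMaxHookSubwordIn (rowWord lam T i) (rowWord lam T (i + 1) ++ rowWord lam T i))

/-! ## Set-valued decomposition tableaux -/

/-- A set-valued decomposition tableau: boxes of `SD_lam` are filled by finite nonempty
sets of positive integers, all of whose distributions are decomposition tableaux. -/
def IsSetDecompTab (lam : List ℕ) (T : ℕ × ℕ → Finset ℕ) : Prop :=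
  (∀ i j, InSD lam i j → (T (i, j)).Nonempty ∧ 0 ∉ T (i, j)) ∧
  (∀ d : ℕ × ℕ → ℕ, (∀ i j, InSD lam i j → d (i, j) ∈ T (i, j)) → IsDecompTab lam d)

/-- Set-valued decomposition tableau whose every entry is contained in `{1, …, n}`. -/
def IsSetDecompTabN (n : ℕ) (lam : List ℕ) (T : ℕ × ℕ → Finset ℕ) : Prop :=
  IsSetDecompTab lam T ∧ ∀ i j, InSD lam i j → ∀ v ∈ T (i, j), v ≤ n

/-! ## Reverse row reading words -/

/-- The boxes of `SD_lam` in reverse row reading order: the first row read right to left,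
then the second row right to left, and so on. -/
def revrowBoxes (lam : List ℕ) : List (ℕ × ℕ) :=
  (List.range lam.length).flatMap fun r =>
    (List.range (lam.getD r 0)).reverse.map fun j => (r + 1, r + 1 + j)

/-- Position of a box in the reverse row reading order. -/
def boxIdx (lam : List ℕ) (b : ℕ × ℕ) : ℕ := (revrowBoxes lam).idxOf b

/-- The reverse row reading word of a set-valued tableau, with each letter labelled by
its box: entries within each box are listed in decreasing order. -/
def revrowEntries (lam : List ℕ) (T : ℕ × ℕ → Finset ℕ) : List ((ℕ × ℕ) × ℕ) :=
  (revrowBoxes lam).flatMap fun b => (((T b).sort (· ≤ ·)).reverse).map fun v => (b, v)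

/-- The reverse row reading word of a set-valued tableau. -/
def revrowWord (lam : List ℕ) (T : ℕ × ℕ → Finset ℕ) : List ℕ :=
  (revrowEntries lam T).map Prod.snd

/-- `wtSet lam T k` is the number of boxes of `T` whose entry contains `k`. -/
noncomputable def wtSet (lam : List ℕ) (T : ℕ × ℕ → Finset ℕ) (k : ℕ) : ℕ :=
  ((revrowBoxes lam).filter fun b => decide (k ∈ T b)).length

/-- `wtNum lam T k` is the number of boxes of an ordinary tableau `T` equal to `k`. -/
noncomputable def wtNum (lam : List ℕ) (T : ℕ × ℕ → ℕ) (k : ℕ) : ℕ :=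
  ((revrowBoxes lam).filter fun b => decide (T b = k)).length

/-! ## Parenthesis pairing: `i`-unpaired letters -/

/-- Number of unmatched `i+1`'s ( "(" ) after scanning `u` left to right,
where each `i` ( ")" ) cancels the most recent unmatched `i+1`. -/
def openCount (i : ℕ) (u : List ℕ) : ℕ :=
  u.foldl (fun acc a => if a = i + 1 then acc + 1 else if a = i then acc - 1 else acc) 0

/-- Number of unmatched `i`'s ( ")" ) after scanning `u` right to left,
where each `i+1` ( "(" ) cancels the nearest unmatched `i` to its right. -/
def closeCount (i : ℕ) (u : List ℕ) : ℕ :=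
  u.foldr (fun a acc => if a = i then acc + 1 else if a = i + 1 then acc - 1 else acc) 0

/-- Position `p` of `w` holds an `i`-unpaired letter equal to `i+1`. -/
def UnpairedHigh (i : ℕ) (w : List ℕ) (p : ℕ) : Prop :=
  p < w.length ∧ w.getD p 0 = i + 1 ∧ closeCount i (w.drop (p + 1)) = 0

/-- Position `p` of `w` holds an `i`-unpaired letter equal to `i`. -/
def UnpairedLow (i : ℕ) (w : List ℕ) (p : ℕ) : Prop :=
  p < w.length ∧ w.getD p 0 = i ∧ openCount i (w.take p) = 0

instance (i : ℕ) (w : List ℕ) (p : ℕ) : Decidable (UnpairedHigh i w p) := by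
  unfold UnpairedHigh; infer_instance

instance (i : ℕ) (w : List ℕ) (p : ℕ) : Decidable (UnpairedLow i w p) := by
  unfold UnpairedLow; infer_instance

/-- The number of `i`-unpaired letters equal to `i+1` in `w`. -/
def numUnpairedHigh (i : ℕ) (w : List ℕ) : ℕ :=
  ((List.range w.length).filter fun p => decide (UnpairedHigh i w p)).length

/-- The number of `i`-unpaired letters equal to `i` in `w`. -/
def numUnpairedLow (i : ℕ) (w : List ℕ) : ℕ :=
  ((List.range w.length).filter fun p => decide (UnpairedLow i w p)).length

/-! ## Iterated partial operators and string lengths -/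

/-- Iterate a partial operator, with the convention that `0` (i.e. `none`) is absorbing. -/
def iterOpt {α : Type*} (g : α → Option α) : ℕ → α → Option α
  | 0, a => some a
  | k + 1, a => (g a).bind (iterOpt g k)

/-- `m` is the exact string length `sup {k | g^k a ≠ 0}` of `a` under `g`. -/
def HasStringLen {α : Type*} (g : α → Option α) (a : α) (m : ℕ) : Prop :=
  iterOpt g m a ≠ none ∧ iterOpt g (m + 1) a = none

/-! ## The queer crystal operators on set-valued decomposition tableaux -/

/-- The raising crystal operator `e_i` on set-valued decomposition tableaux. -/
noncomputable def eCrystal (lam : List ℕ) (i : ℕ) (T : ℕ × ℕ → Finset ℕ) :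
    Option (ℕ × ℕ → Finset ℕ) :=
  if h : ∃ p, UnpairedHigh i (revrowWord lam T) p then
    let xy := ((revrowEntries lam T).getD (Nat.find h) ((0, 0), 0)).1
    let T1 := Function.update T xy (insert i ((T xy).erase (i + 1)))
    if IsSetDecompTab lam T1 then some T1
    else if _hab : ∃ m, m < boxIdx lam xy ∧ i ∈ T ((revrowBoxes lam).getD m (0, 0)) ∧
        i + 1 ∈ T ((revrowBoxes lam).getD m (0, 0)) then
      let m := Nat.findGreatest (fun m => m < boxIdx lam xy ∧
          i ∈ T ((revrowBoxes lam).getD m (0, 0)) ∧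
          i + 1 ∈ T ((revrowBoxes lam).getD m (0, 0))) (boxIdx lam xy)
      let ab := (revrowBoxes lam).getD m (0, 0)
      some (Function.update (Function.update T ab ((T ab).erase (i + 1))) xy
        (insert i (T xy)))
    else none
  else none

/-- The lowering crystal operator `f_i` on set-valued decomposition tableaux. -/
noncomputable def fCrystal (lam : List ℕ) (i : ℕ) (T : ℕ × ℕ → Finset ℕ) :
    Option (ℕ × ℕ → Finset ℕ) :=
  if _h : ∃ p, UnpairedLow i (revrowWord lam T) p then
    let p := Nat.findGreatest (fun p => UnpairedLow i (revrowWord lam T) p)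
      (revrowWord lam T).length
    let xy := ((revrowEntries lam T).getD p ((0, 0), 0)).1
    let T1 := Function.update T xy (insert (i + 1) ((T xy).erase i))
    if IsSetDecompTab lam T1 then some T1
    else if hab : ∃ m, boxIdx lam xy < m ∧ m < (revrowBoxes lam).length ∧
        i ∈ T ((revrowBoxes lam).getD m (0, 0)) ∧
        i + 1 ∈ T ((revrowBoxes lam).getD m (0, 0)) then
      let ab := (revrowBoxes lam).getD (Nat.find hab) (0, 0)
      some (Function.update (Function.update T ab ((T ab).erase i)) xy
        (insert (i + 1) (T xy)))
    else none
  else none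

/-- The queer raising operator `e_1̄` on set-valued decomposition tableaux. -/
noncomputable def eBarCrystal (lam : List ℕ) (T : ℕ × ℕ → Finset ℕ) :
    Option (ℕ × ℕ → Finset ℕ) :=
  if h : ∃ p, p < (revrowWord lam T).length ∧ (revrowWord lam T).getD p 0 = 2 ∧
      ∀ q < p, (revrowWord lam T).getD q 0 ≠ 1 then
    let xy := ((revrowEntries lam T).getD (Nat.find h) ((0, 0), 0)).1
    if 1 ∈ T xy then none
    else some (Function.update T xy (insert 1 ((T xy).erase 2)))
  else none

/-- The queer lowering operator `f_1̄` on set-valued decomposition tableaux. -/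
noncomputable def fBarCrystal (lam : List ℕ) (T : ℕ × ℕ → Finset ℕ) :
    Option (ℕ × ℕ → Finset ℕ) :=
  if h : ∃ p, p < (revrowWord lam T).length ∧ (revrowWord lam T).getD p 0 = 1 ∧
      ∀ q < p, (revrowWord lam T).getD q 0 ≠ 2 then
    let xy := ((revrowEntries lam T).getD (Nat.find h) ((0, 0), 0)).1
    some (Function.update T xy (insert 2 ((T xy).erase 1)))
  else none
/-! ## Multiset-valued decomposition tableaux -/

/-- A multiset-valued decomposition tableau in which only the entry `1` may repeat
within a box, all of whose distributions are decomposition tableaux. -/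
def IsMultisetDecompTab (lam : List ℕ) (T : ℕ × ℕ → Multiset ℕ) : Prop :=
  (∀ i j, InSD lam i j → T (i, j) ≠ 0 ∧ 0 ∉ T (i, j) ∧
      ∀ v : ℕ, v ≠ 1 → (T (i, j)).count v ≤ 1) ∧
  (∀ d : ℕ × ℕ → ℕ, (∀ i j, InSD lam i j → d (i, j) ∈ T (i, j)) → IsDecompTab lam d)

/-- Reverse row reading word of a multiset-valued tableau, with boxes recorded. -/
def revrowEntriesM (lam : List ℕ) (T : ℕ × ℕ → Multiset ℕ) : List ((ℕ × ℕ) × ℕ) :=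
  (revrowBoxes lam).flatMap fun b => (((T b).sort (· ≤ ·)).reverse).map fun v => (b, v)

/-- Reverse row reading word of a multiset-valued tableau. -/
def revrowWordM (lam : List ℕ) (T : ℕ × ℕ → Multiset ℕ) : List ℕ :=
  (revrowEntriesM lam T).map Prod.snd

/-- The operator `e*_1̄` on multiset-valued decomposition tableaux: if the first `2` of
the reverse row reading word occurs before every `1`, change it to a `1`. -/
noncomputable def eStarBar (lam : List ℕ) (T : ℕ × ℕ → Multiset ℕ) :
    Option (ℕ × ℕ → Multiset ℕ) :=
  if h : ∃ p, p < (revrowWordM lam T).length ∧ (revrowWordM lam T).getD p 0 = 2 ∧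
      ∀ q < p, (revrowWordM lam T).getD q 0 ≠ 1 then
    let b := ((revrowEntriesM lam T).getD (Nat.find h) ((0, 0), 0)).1
    some (Function.update T b (1 ::ₘ (T b).erase 2))
  else none

/-- The operator `f*_1̄` on multiset-valued decomposition tableaux: if the first `1` of
the reverse row reading word occurs before every `2`, change it to a `2`. -/
noncomputable def fStarBar (lam : List ℕ) (T : ℕ × ℕ → Multiset ℕ) :
    Option (ℕ × ℕ → Multiset ℕ) :=
  if h : ∃ p, p < (revrowWordM lam T).length ∧ (revrowWordM lam T).getD p 0 = 1 ∧
      ∀ q < p, (revrowWordM lam T).getD q 0 ≠ 2 then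
    let b := ((revrowEntriesM lam T).getD (Nat.find h) ((0, 0), 0)).1
    some (Function.update T b (2 ::ₘ (T b).erase 1))
  else none

/-! ## Linked `i`-words and square-root crystal operators -/

/-- Characters of a linked `i`-word: `(`, `)` and `-`. -/
inductive PChar : Type
  | op : PChar
  | cl : PChar
  | dash : PChar
  deriving DecidableEq

/-- The linked `i`-word of a set-valued tableau, with each character labelled by its box:
a box containing `i` but not `i+1` gives `)`, a box containing `i+1` but not `i` gives `(`,
and a box containing both gives `)-(`; boxes are read in reverse row reading order. -/
def tokens (lam : List ℕ) (i : ℕ) (T : ℕ × ℕ → Finset ℕ) : List (PChar × (ℕ × ℕ)) :=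
  (revrowBoxes lam).flatMap fun b =>
    if i ∈ T b ∧ i + 1 ∈ T b then [(PChar.cl, b), (PChar.dash, b), (PChar.op, b)]
    else if i ∈ T b then [(PChar.cl, b)]
    else if i + 1 ∈ T b then [(PChar.op, b)]
    else []

/-- Unmatched `(`s after scanning left to right (ignoring dashes). -/
def openCnt (u : List PChar) : ℕ :=
  u.foldl (fun acc a => match a with
    | PChar.op => acc + 1
    | PChar.cl => acc - 1
    | PChar.dash => acc) 0

/-- Unmatched `)`s after scanning right to left (ignoring dashes). -/
def closeCnt (u : List PChar) : ℕ :=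
  u.foldr (fun a acc => match a with
    | PChar.cl => acc + 1
    | PChar.op => acc - 1
    | PChar.dash => acc) 0

/-- Position `p` holds an unpaired `(`. -/
def UnpairedOp (ws : List PChar) (p : ℕ) : Prop :=
  p < ws.length ∧ ws.getD p PChar.dash = PChar.op ∧ closeCnt (ws.drop (p + 1)) = 0

/-- Position `p` holds an unpaired `)`. -/
def UnpairedCl (ws : List PChar) (p : ℕ) : Prop :=
  p < ws.length ∧ ws.getD p PChar.dash = PChar.cl ∧ openCnt (ws.take p) = 0

/-- A fully matched (balanced) parenthesis word, ignoring dashes. -/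
def BalancedP (u : List PChar) : Prop :=
  u.count PChar.op = u.count PChar.cl ∧
  ∀ k, (u.take k).count PChar.cl ≤ (u.take k).count PChar.op

/-- The `(` at position `a` is matched with the `)` at position `b`. -/
def MatchedPair (ws : List PChar) (a b : ℕ) : Prop :=
  a < b ∧ b < ws.length ∧ ws.getD a PChar.dash = PChar.op ∧
  ws.getD b PChar.dash = PChar.cl ∧ BalancedP ((ws.drop (a + 1)).take (b - (a + 1)))

/-- Generating relation for equivalence classes of characters: a matched pair together
with everything between them lies in one class, and so do the three characters `)-(`
coming from a single box. -/
def LinkRel (ws : List PChar) (p q : ℕ) : Prop :=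
  (∃ a b, MatchedPair ws a b ∧ a ≤ p ∧ p ≤ b ∧ a ≤ q ∧ q ≤ b) ∨
  (∃ d, 1 ≤ d ∧ d + 1 < ws.length ∧ ws.getD d PChar.op = PChar.dash ∧
    (p = d - 1 ∨ p = d ∨ p = d + 1) ∧ (q = d - 1 ∨ q = d ∨ q = d + 1))

/-- Two positions lie in the same equivalence class of the linked `i`-word. -/
def SameClass (ws : List PChar) : ℕ → ℕ → Prop := Relation.ReflTransGen (LinkRel ws)

/-- The class of position `p` contains an unpaired `(`. -/
def HasUnpairedOpIn (ws : List PChar) (p : ℕ) : Prop :=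
  ∃ q, SameClass ws p q ∧ UnpairedOp ws q

/-- The class of position `p` contains an unpaired `)`. -/
def HasUnpairedClIn (ws : List PChar) (p : ℕ) : Prop :=
  ∃ q, SameClass ws p q ∧ UnpairedCl ws q

/-- Position `p` belongs to a left form: a class with no unpaired `)` that ends
with an unpaired `(`. -/
def IsLeftFormAt (ws : List PChar) (p : ℕ) : Prop :=
  p < ws.length ∧ HasUnpairedOpIn ws p ∧ ¬ HasUnpairedClIn ws p

/-- Position `p` belongs to a right form: a class with no unpaired `(` that starts
with an unpaired `)`. -/
def IsRightFormAt (ws : List PChar) (p : ℕ) : Prop :=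
  p < ws.length ∧ HasUnpairedClIn ws p ∧ ¬ HasUnpairedOpIn ws p

/-- The square-root raising operator `e'_i` on set-valued decomposition tableaux. -/
noncomputable def eSqrt (lam : List ℕ) (i : ℕ) (T : ℕ × ℕ → Finset ℕ) :
    Option (ℕ × ℕ → Finset ℕ) :=
  let tk := tokens lam i T
  let ws := tk.map Prod.fst
  if hc : ∃ p, UnpairedOp ws p ∧ HasUnpairedClIn ws p then
    -- the `)-(` at the end of the combined form: remove `i+1` from its box
    let b := (tk.getD (Nat.find hc) (PChar.op, (0, 0))).2
    some (Function.update T b ((T b).erase (i + 1)))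
  else if hl : ∃ p, IsLeftFormAt ws p then
    -- the `(` at the start of the first left form: add `i` to its box
    let b := (tk.getD (Nat.find hl) (PChar.op, (0, 0))).2
    some (Function.update T b (insert i (T b)))
  else none

/-- The square-root lowering operator `f'_i` on set-valued decomposition tableaux. -/
noncomputable def fSqrt (lam : List ℕ) (i : ℕ) (T : ℕ × ℕ → Finset ℕ) :
    Option (ℕ × ℕ → Finset ℕ) :=
  let tk := tokens lam i T
  let ws := tk.map Prod.fst
  if hc : ∃ p, UnpairedCl ws p ∧ HasUnpairedOpIn ws p then
    -- the `)-(` at the beginning of the combined form: remove `i` from its box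
    let b := (tk.getD (Nat.find hc) (PChar.op, (0, 0))).2
    some (Function.update T b ((T b).erase i))
  else if _hr : ∃ p, IsRightFormAt ws p then
    -- the `)` at the end of the last right form: add `i+1` to its box
    let b := (tk.getD (Nat.findGreatest (fun p => IsRightFormAt ws p) ws.length)
        (PChar.op, (0, 0))).2
    some (Function.update T b (insert (i + 1) (T b)))
  else none

/-- The square-root queer raising operator `e'_1̄`. -/
noncomputable def eBarSqrt (lam : List ℕ) (T : ℕ × ℕ → Finset ℕ) :
    Option (ℕ × ℕ → Finset ℕ) :=
  if h : ∃ m, m < (revrowBoxes lam).length ∧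
      (1 ∈ T ((revrowBoxes lam).getD m (0, 0)) ∨ 2 ∈ T ((revrowBoxes lam).getD m (0, 0))) then
    let b := (revrowBoxes lam).getD (Nat.find h) (0, 0)
    if 1 ∈ T b then
      if 2 ∈ T b then some (Function.update T b ((T b).erase 2)) else none
    else some (Function.update T b (insert 1 (T b)))
  else none

/-- The square-root queer lowering operator `f'_1̄`. -/
noncomputable def fBarSqrt (lam : List ℕ) (T : ℕ × ℕ → Finset ℕ) :
    Option (ℕ × ℕ → Finset ℕ) :=
  if h : ∃ m, m < (revrowBoxes lam).length ∧
      (1 ∈ T ((revrowBoxes lam).getD m (0, 0)) ∨ 2 ∈ T ((revrowBoxes lam).getD m (0, 0))) then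
    let b := (revrowBoxes lam).getD (Nat.find h) (0, 0)
    if 2 ∈ T b then
      if 1 ∈ T b then some (Function.update T b ((T b).erase 1)) else none
    else some (Function.update T b (insert 2 (T b)))
  else none
/-! ## Abstract √gl_n- and √q_n-crystals -/

/-- The data of a crystal-like structure: a weight map (coordinates `1, …, n` are the
relevant ones) and partial raising/lowering operators indexed by `i ∈ [n-1]`. -/
structure SqGlData (B : Type*) where
  wt : B → ℕ → ℕ
  e : ℕ → B → Option B
  f : ℕ → B → Option B

/-- The axioms of a `√gl_n`-crystal. -/
def IsSqGlCrystal {B : Type*} (n : ℕ) (D : SqGlData B) : Prop :=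
  (∀ i, 1 ≤ i → i < n → ∀ b, ∃ ep ph : ℕ,
      HasStringLen (D.e i) b ep ∧ HasStringLen (D.f i) b ph ∧
      Even (ep + ph) ∧ (ph : ℤ) - ep = 2 * ((D.wt b i : ℤ) - D.wt b (i + 1))) ∧
  (∀ i, 1 ≤ i → i < n → ∀ b c, D.e i b = some c ↔ D.f i c = some b) ∧
  (∀ i, 1 ≤ i → i < n → ∀ b c, D.e i b = some c → ∀ ep, HasStringLen (D.e i) b ep →
      ∀ k, (D.wt c k : ℤ) - D.wt b k =
        if Even ep then (if k = i then 1 else 0) else (if k = i + 1 then -1 else 0))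

/-- The data of a queer crystal-like structure. -/
structure SqQData (B : Type*) extends SqGlData B where
  ebar : B → Option B
  fbar : B → Option B

/-- The axioms of a `√q_n`-crystal. -/
def IsSqQnCrystal {B : Type*} (n : ℕ) (D : SqQData B) : Prop :=
  IsSqGlCrystal n D.toSqGlData ∧
  (∀ i, 3 ≤ i → i < n → ∀ b,
      (D.e i b).bind D.ebar = (D.ebar b).bind (D.e i) ∧
      (D.f i b).bind D.ebar = (D.ebar b).bind (D.f i) ∧
      (D.e i b).bind D.fbar = (D.fbar b).bind (D.e i) ∧
      (D.f i b).bind D.fbar = (D.fbar b).bind (D.f i)) ∧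
  (∀ i, 3 ≤ i → i < n → ∀ b c, (D.ebar b = some c ∨ D.fbar b = some c) →
      (∀ m, HasStringLen (D.e i) b m ↔ HasStringLen (D.e i) c m) ∧
      (∀ m, HasStringLen (D.f i) b m ↔ HasStringLen (D.f i) c m)) ∧
  (∀ b, ∃ ep ph : ℕ, HasStringLen D.ebar b ep ∧ HasStringLen D.fbar b ph ∧
      ep + ph = (if D.wt b 1 = 0 ∧ D.wt b 2 = 0 then 0 else 2)) ∧
  (∀ b c, D.ebar b = some c ↔ D.fbar c = some b) ∧
  (∀ b c, D.ebar b = some c → ∀ ep, HasStringLen D.ebar b ep →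
      ∀ k, (D.wt c k : ℤ) - D.wt b k =
        if ep = 2 then (if k = 1 then 1 else 0) else (if k = 2 then -1 else 0))

/-- The square of a partial operator. -/
def sqOp {B : Type*} (g : B → Option B) : B → Option B := fun b => (g b).bind g

/-- The axioms of a (seminormal) `gl_n`-crystal for given weight map and operators. -/
def GlSeminormalAxioms {B : Type*} (n : ℕ) (wt : B → ℕ → ℕ)
    (E F : ℕ → B → Option B) : Prop :=
  (∀ i, 1 ≤ i → i < n → ∀ b c, E i b = some c ↔ F i c = some b) ∧
  (∀ i, 1 ≤ i → i < n → ∀ b c, E i b = some c →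
      ∀ k, (wt c k : ℤ) - wt b k = (if k = i then 1 else 0) - (if k = i + 1 then 1 else 0)) ∧
  (∀ i, 1 ≤ i → i < n → ∀ b, ∃ ep ph : ℕ,
      HasStringLen (E i) b ep ∧ HasStringLen (F i) b ph ∧
      (ph : ℤ) - ep = (wt b i : ℤ) - wt b (i + 1))

/-- The additional axioms making a `gl_n`-crystal into a `q_n`-crystal. -/
def QnExtraAxioms {B : Type*} (n : ℕ) (wt : B → ℕ → ℕ)
    (E F : ℕ → B → Option B) (Eb Fb : B → Option B) : Prop :=
  (∀ i, 3 ≤ i → i < n → ∀ b,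
      (E i b).bind Eb = (Eb b).bind (E i) ∧ (F i b).bind Eb = (Eb b).bind (F i) ∧
      (E i b).bind Fb = (Fb b).bind (E i) ∧ (F i b).bind Fb = (Fb b).bind (F i)) ∧
  (∀ i, 3 ≤ i → i < n → ∀ b c, (Eb b = some c ∨ Fb b = some c) →
      (∀ m, HasStringLen (E i) b m ↔ HasStringLen (E i) c m) ∧
      (∀ m, HasStringLen (F i) b m ↔ HasStringLen (F i) c m)) ∧
  (∀ b c, Eb b = some c ↔ Fb c = some b) ∧
  (∀ b c, Eb b = some c →
      ∀ k, (wt c k : ℤ) - wt b k = (if k = 1 then 1 else 0) - (if k = 2 then 1 else 0))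

/-- String length as a function (the supremum of the set of iterates that survive). -/
noncomputable def strLen {B : Type*} (g : B → Option B) (b : B) : ℕ :=
  sSup {k | iterOpt g k b ≠ none}

/-- Tensor product of `√gl_n`-crystal data. -/
noncomputable def tensorGl {B C : Type*} (DB : SqGlData B) (DC : SqGlData C) :
    SqGlData (B × C) where
  wt := fun bc k => DB.wt bc.1 k + DC.wt bc.2 k
  e := fun i bc =>
    if strLen (DB.e i) bc.1 ≤ strLen (DC.f i) bc.2 then
      (DC.e i bc.2).map fun c' => (bc.1, c')
    else (DB.e i bc.1).map fun b' => (b', bc.2)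
  f := fun i bc =>
    if strLen (DB.e i) bc.1 < strLen (DC.f i) bc.2 then
      (DC.f i bc.2).map fun c' => (bc.1, c')
    else (DB.f i bc.1).map fun b' => (b', bc.2)

/-- Tensor product of `√q_n`-crystal data. -/
noncomputable def tensorQ {B C : Type*} (DB : SqQData B) (DC : SqQData C) :
    SqQData (B × C) where
  toSqGlData := tensorGl DB.toSqGlData DC.toSqGlData
  ebar := fun bc =>
    if DB.wt bc.1 1 = 0 ∧ DB.wt bc.1 2 = 0 then (DC.ebar bc.2).map fun c' => (bc.1, c')
    else (DB.ebar bc.1).map fun b' => (b', bc.2)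
  fbar := fun bc =>
    if DB.wt bc.1 1 = 0 ∧ DB.wt bc.1 2 = 0 then (DC.fbar bc.2).map fun c' => (bc.1, c')
    else (DB.fbar bc.1).map fun b' => (b', bc.2)
/-! ## Generating functions -/

/-- A set-valued decomposition tableau, normalized to be empty off the shifted diagram. -/
def IsNormalizedSVDT (lam : List ℕ) (T : ℕ × ℕ → Finset ℕ) : Prop :=
  IsSetDecompTab lam T ∧ ∀ i j, ¬ InSD lam i j → T (i, j) = ∅

/-- A decomposition tableau, normalized to be `0` off the shifted diagram. -/
def IsNormalizedDT (lam : List ℕ) (T : ℕ × ℕ → ℕ) : Prop :=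
  IsDecompTab lam T ∧ ∀ i j, ¬ InSD lam i j → T (i, j) = 0

/-- `Σ_λ = ∑_{T ∈ SetDecTab(λ)} x^T` as a formal power series; variable `k` stands for
`x_{k+1}`, i.e. records occurrences of the letter `k+1`. -/
noncomputable def SigmaLam (lam : List ℕ) : MvPowerSeries ℕ ℤ :=
  fun d => (Set.ncard
    {T : ℕ × ℕ → Finset ℕ | IsNormalizedSVDT lam T ∧ ∀ k, wtSet lam T (k + 1) = d k} : ℤ)

/-- The Schur `P`-function `P_λ = ∑_{T ∈ DecTab(λ)} x^T` as a formal power series. -/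
noncomputable def SchurPfun (lam : List ℕ) : MvPowerSeries ℕ ℤ :=
  fun d => (Set.ncard
    {T : ℕ × ℕ → ℕ | IsNormalizedDT lam T ∧ ∀ k, wtNum lam T (k + 1) = d k} : ℤ)

/-! ## Marked (primed) shifted tableaux and `GP`-functions.
We encode the marked alphabet `1' < 1 < 2' < 2 < ⋯` into `ℕ` by `k' ↦ 2k - 1` and
`k ↦ 2k`, so primed letters are odd and the natural order is preserved. -/

/-- A semistandard marked shifted tableau (as a distribution): weakly increasing rows and
columns, no primed (odd) letter repeated in a row, no unprimed (even) letter repeated in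
a column. -/
def IsSemistandardMarked (lam : List ℕ) (d : ℕ × ℕ → ℕ) : Prop :=
  (∀ i j, InSD lam i j → InSD lam i (j + 1) → d (i, j) ≤ d (i, j + 1)) ∧
  (∀ i j, InSD lam i j → InSD lam (i + 1) j → d (i, j) ≤ d (i + 1, j)) ∧
  (∀ i j j', InSD lam i j → InSD lam i j' → j < j' → d (i, j) = d (i, j') →
    Even (d (i, j))) ∧
  (∀ i i' j, InSD lam i j → InSD lam i' j → i < i' → d (i, j) = d (i', j) →
    Odd (d (i, j)))

/-- A semistandard set-valued shifted tableau in the marked alphabet, with no primed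
letters on the main diagonal. -/
def IsSetSSMarkedShifted (lam : List ℕ) (T : ℕ × ℕ → Finset ℕ) : Prop :=
  (∀ i j, InSD lam i j → (T (i, j)).Nonempty ∧ ∀ v ∈ T (i, j), 1 ≤ v) ∧
  (∀ i, InSD lam i i → ∀ v ∈ T (i, i), Even v) ∧
  (∀ d : ℕ × ℕ → ℕ, (∀ i j, InSD lam i j → d (i, j) ∈ T (i, j)) →
    IsSemistandardMarked lam d)

/-- `wtMarked lam T k` is the total number of occurrences of `k` or `k'` in `T`. -/
noncomputable def wtMarked (lam : List ℕ) (T : ℕ × ℕ → Finset ℕ) (k : ℕ) : ℕ :=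
  ((revrowBoxes lam).map fun b =>
    ((T b).filter fun v => v = 2 * k - 1 ∨ v = 2 * k).card).sum

/-- The K-theoretic Schur `P`-function `GP_λ` as a formal power series; variable `k`
stands for `x_{k+1}`. -/
noncomputable def GPfun (lam : List ℕ) : MvPowerSeries ℕ ℤ :=
  fun d => (Set.ncard
    {T : ℕ × ℕ → Finset ℕ | IsSetSSMarkedShifted lam T ∧
      (∀ i j, ¬ InSD lam i j → T (i, j) = ∅) ∧
      ∀ k, wtMarked lam T (k + 1) = d k} : ℤ)

/-! ## Polynomial versions (variables `x_1, …, x_n`, i.e. `X 1, …, X n`) -/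

/-- The boxes of the (unshifted) Young diagram of `lam`, listed row by row. -/
def YDboxes (lam : List ℕ) : List (ℕ × ℕ) :=
  (List.range lam.length).flatMap fun r =>
    (List.range (lam.getD r 0)).map fun j => (r + 1, j + 1)

/-- A semistandard (unshifted) Young tableau: rows weakly increase, columns strictly
increase. -/
def IsSemistandardYT (lam : List ℕ) (d : ℕ × ℕ → ℕ) : Prop :=
  (∀ i j, InYD lam i j → InYD lam i (j + 1) → d (i, j) ≤ d (i, j + 1)) ∧
  (∀ i j, InYD lam i j → InYD lam (i + 1) j → d (i, j) < d (i + 1, j))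

/-- A semistandard set-valued (unshifted) tableau with entries in `{1, …, n}`,
normalized off the diagram. -/
def IsSetSSYT (n : ℕ) (lam : List ℕ) (T : ℕ × ℕ → Finset ℕ) : Prop :=
  (∀ i j, InYD lam i j → (T (i, j)).Nonempty ∧ ∀ v ∈ T (i, j), 1 ≤ v ∧ v ≤ n) ∧
  (∀ i j, ¬ InYD lam i j → T (i, j) = ∅) ∧
  (∀ d : ℕ × ℕ → ℕ, (∀ i j, InYD lam i j → d (i, j) ∈ T (i, j)) → IsSemistandardYT lam d)

/-- The symmetric Grothendieck polynomial `G_λ(x_1, …, x_n)`. -/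
noncomputable def Gpoly (n : ℕ) (lam : List ℕ) : MvPolynomial ℕ ℤ :=
  ∑ᶠ T ∈ {T : ℕ × ℕ → Finset ℕ | IsSetSSYT n lam T},
    ((YDboxes lam).map fun b =>
      ∏ v ∈ T b, (MvPolynomial.X v : MvPolynomial ℕ ℤ)).prod

/-- A semistandard set-valued marked shifted tableau with letters at most `n`,
normalized off the diagram. -/
def IsSetSSMarkedShiftedN (n : ℕ) (lam : List ℕ) (T : ℕ × ℕ → Finset ℕ) : Prop :=
  IsSetSSMarkedShifted lam T ∧ (∀ i j, ¬ InSD lam i j → T (i, j) = ∅) ∧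
  ∀ i j, InSD lam i j → ∀ v ∈ T (i, j), v ≤ 2 * n

/-- The K-theoretic Schur `P`-polynomial `GP_λ(x_1, …, x_n)`. -/
noncomputable def GPpoly (n : ℕ) (lam : List ℕ) : MvPolynomial ℕ ℤ :=
  ∑ᶠ T ∈ {T : ℕ × ℕ → Finset ℕ | IsSetSSMarkedShiftedN n lam T},
    ((revrowBoxes lam).map fun b =>
      ∏ v ∈ T b, (MvPolynomial.X ((v + 1) / 2) : MvPolynomial ℕ ℤ)).prod

/-- The character of the `m`-th tensor power of the standard `√q_n`-crystal, whose
elements are the nonempty subsets of `{1, …, n}` with weight the indicator vector. -/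
noncomputable def standardChar (n m : ℕ) : MvPolynomial ℕ ℤ :=
  ∑ b : Fin m → {S : Finset (Fin n) // S.Nonempty},
    ∏ j : Fin m, ∏ k ∈ (b j).1, (MvPolynomial.X ((k : ℕ) + 1) : MvPolynomial ℕ ℤ)
/-!
Let `(x, y)` be the box of an `i`-unpaired `i`. Every `i+1` read before this `i` is
matched, so a block of boxes read just before `(x, y)` holds at least as many `i`'s as `i+1`'s;
the block used is made of the leftmost `N` boxes of row `x - 1` and the boxes of row `x` to the
right of `y`.

Choosing `i` in `(x, y)` and in every box to its right containing `i` gives a weakly decreasing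
subword (a run) of row `x`, which in cases (b) and (c) extends over the whole start of the row.
As row `x - 1` is a hook subword of maximal length in `ρ_x ρ_{x-1}`, every entry of row `x - 1`
above the run exceeds `i`, and an `i+1` there is repeated in every later box above the run.
Taking `N` to be the length of the run, each of the configurations (a), (b), (c) then puts more
`i+1`'s than `i`'s into the block.
-/

theorem Finset.exists_le_of_min_le {α : Type*} [LinearOrder α] {s : Finset α} {a : α}
    (h : s.min ≤ a) : ∃ b ∈ s, b ≤ a := by
  obtain ⟨m, hm⟩ := WithTop.ne_top_iff_exists.mp (ne_top_of_le_ne_top WithTop.coe_ne_top h)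
  exact ⟨m, Finset.mem_of_min hm.symm, WithTop.coe_le_coe.mp (hm ▸ h)⟩

theorem Finset.exists_le_of_le_max {α : Type*} [LinearOrder α] {s : Finset α} {a : α}
    (h : a ≤ s.max) : ∃ b ∈ s, a ≤ b := by
  obtain ⟨m, hm⟩ := WithBot.ne_bot_iff_exists.mp (ne_bot_of_le_ne_bot WithBot.coe_ne_bot h)
  exact ⟨m, Finset.mem_of_max hm.symm, WithBot.coe_le_coe.mp (hm ▸ h)⟩

theorem List.exists_of_lt_length_flatMap {α β : Type*} (f : α → List β) :
    ∀ (B : List α) {p : ℕ} (hp : p < (B.flatMap f).length), ∃ B₁ b B₂ k,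
      ∃ hk : k < (f b).length, B = B₁ ++ b :: B₂ ∧
        (B.flatMap f).take p = B₁.flatMap f ++ (f b).take k ∧ (B.flatMap f)[p] = (f b)[k]
  | [], _, hp => by simp at hp
  | b₀ :: B, p, hp => by
    by_cases h : p < (f b₀).length
    · exact ⟨[], b₀, B, p, h, rfl, by simp [List.take_append_of_le_length h.le],
        by simp [List.getElem_append_left h]⟩
    · have hp' : p - (f b₀).length < (B.flatMap f).length := by
        simp only [List.flatMap_cons, List.length_append] at hp; omega
      obtain ⟨B₁, b, B₂, k, hk, rfl, htake, hget⟩ := List.exists_of_lt_length_flatMap f B hp'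
      refine ⟨b₀ :: B₁, b, B₂, k, hk, rfl, ?_, ?_⟩
      · rw [List.flatMap_cons, List.take_append, List.take_of_length_le (by omega), htake]
        simp
      · simp only [List.flatMap_cons] at hget ⊢
        rw [List.getElem_append_right (by omega)]
        exact hget

namespace SetDecompTab

variable {lam : List ℕ} {T : ℕ × ℕ → Finset ℕ} {d : ℕ × ℕ → ℕ}

theorem add_count_succ_le_foldl (i : ℕ) (u : List ℕ) (acc : ℕ) :
    acc + u.count (i + 1) ≤
      u.foldl (fun acc a => if a = i + 1 then acc + 1 else if a = i then acc - 1 else acc) acc +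
        u.count i := by
  induction u generalizing acc with
  | nil => simp
  | cons a u ih =>
    simp only [List.foldl_cons, List.count_cons, beq_iff_eq]
    by_cases h1 : a = i + 1
    · have := ih (acc + 1)
      simp only [h1, if_true]
      omega
    · by_cases h2 : a = i
      · have := ih (acc - 1)
        simp only [h2, if_true, (Nat.succ_ne_self i).symm, if_false]
        omega
      · have := ih acc
        simp only [h1, h2, if_false]
        omega

theorem count_succ_le_count_of_openCount_eq_zero {i : ℕ} {u w : List ℕ}
    (h : openCount i (u ++ w) = 0) : w.count (i + 1) ≤ w.count i := by
  rw [openCount, List.foldl_append] at h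
  have := add_count_succ_le_foldl i w (openCount i u)
  rw [openCount] at this
  omega

theorem isHookWord_iff {w : List ℕ} :
    IsHookWord w ↔ (∀ v ∈ w, 0 < v) ∧ ∃ m, 1 ≤ m ∧ m ≤ w.length ∧
      (w.take m).Pairwise (· ≥ ·) ∧ (w.drop (m - 1)).Pairwise (· < ·) := by
  refine and_congr_right fun _ => exists_congr fun m => ?_
  refine and_congr_right fun hm => and_congr_right fun hmw => ?_
  rw [← List.isChain_iff_pairwise, ← List.isChain_iff_pairwise, List.isChain_iff_getElem,
    List.isChain_iff_getElem]
  apply and_congr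
  · constructor
    · intro h k hk
      simp only [List.length_take] at hk
      have := h k (by omega)
      simp only [List.getElem_take]
      rwa [List.getD_eq_getElem _ _ (by omega), List.getD_eq_getElem _ _ (by omega)] at this
    · intro h j hj
      have := h j (by simp; omega)
      simp only [List.getElem_take] at this
      rwa [List.getD_eq_getElem _ _ (by omega), List.getD_eq_getElem _ _ (by omega)]
  · constructor
    · intro h k hk
      simp only [List.length_drop] at hk
      have := h (m - 1 + k) (by omega) (by omega)
      simp only [List.getElem_drop]
      rw [List.getD_eq_getElem _ _ (by omega), List.getD_eq_getElem _ _ (by omega)] at this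
      simpa only [← Nat.add_assoc] using this
    · intro h j hj1 hj2
      have := h (j - (m - 1)) (by simp; omega)
      simp only [List.getElem_drop, (by omega : m - 1 + (j - (m - 1)) = j),
        (by omega : m - 1 + (j - (m - 1) + 1) = j + 1)] at this
      rwa [List.getD_eq_getElem _ _ (by omega), List.getD_eq_getElem _ _ (by omega)]

theorem IsHookWord.drop {w : List ℕ} (hw : IsHookWord w) {j : ℕ} (hj : j < w.length) :
    IsHookWord (w.drop j) := by
  obtain ⟨hpos, m, hm1, hmw, hdec, hinc⟩ := isHookWord_iff.mp hw
  refine isHookWord_iff.mpr ⟨fun v hv => hpos v (List.mem_of_mem_drop hv), ?_⟩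
  by_cases hjm : j < m
  · refine ⟨m - j, by omega, by simp; omega, ?_, ?_⟩
    · rw [List.take_drop, (by omega : j + (m - j) = m)]
      exact hdec.sublist (List.drop_sublist _ _)
    · rwa [List.drop_drop, (by omega : j + (m - j - 1) = m - 1)]
  · refine ⟨1, le_rfl, by simp; omega, ?_, ?_⟩
    · cases w.drop j <;> simp
    · simpa using hinc.sublist (List.drop_sublist_drop_left w (show m - 1 ≤ j by omega))

theorem IsHookWord.pairwise_drop_of_lt {w : List ℕ} (hw : IsHookWord w) {j : ℕ}
    (hj : j + 1 < w.length) (hlt : w[j] < w[j + 1]) : (w.drop j).Pairwise (· < ·) := by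
  obtain ⟨-, m, -, -, hdec, hinc⟩ := isHookWord_iff.mp hw
  by_cases hjm : j + 1 < m
  · have := List.pairwise_iff_getElem.mp hdec j (j + 1) (by simp; omega) (by simp; omega)
      (by omega)
    simp only [List.getElem_take] at this
    omega
  · exact hinc.sublist (List.drop_sublist_drop_left _ (by omega))

theorem IsHookWord.pairwise_take_of_le {w : List ℕ} (hw : IsHookWord w) {s t : ℕ}
    (hst : s < t) (ht : t < w.length) (hle : w[t] ≤ w[s]) :
    (w.take (s + 1)).Pairwise (· ≥ ·) := by
  obtain ⟨-, m, -, -, hdec, hinc⟩ := isHookWord_iff.mp hw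
  by_cases hsm : s + 1 ≤ m
  · exact hdec.sublist (List.take_sublist_take_left hsm)
  · have := List.pairwise_iff_getElem.mp hinc (s - (m - 1)) (t - (m - 1)) (by simp; omega)
      (by simp; omega) (by omega)
    simp only [List.getElem_drop, (by omega : m - 1 + (s - (m - 1)) = s),
      (by omega : m - 1 + (t - (m - 1)) = t)] at this
    omega

theorem isHookWord_append_cons {D s : List ℕ} {a : ℕ} (hD : D.Pairwise (· ≥ ·))
    (hDpos : ∀ v ∈ D, 0 < v) (hs : IsHookWord (a :: s)) (hle : ∀ b ∈ D, a ≤ b) :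
    IsHookWord (D ++ a :: s) := by
  obtain ⟨hpos, m, hm1, hmw, hdec, hinc⟩ := isHookWord_iff.mp hs
  refine isHookWord_iff.mpr ⟨fun v hv => ?_, D.length + m, by omega, by simp at hmw ⊢; omega,
    ?_, ?_⟩
  · rcases List.mem_append.mp hv with hv | hv
    exacts [hDpos v hv, hpos v hv]
  · rw [List.take_length_add_append, List.pairwise_append]
    refine ⟨hD, hdec, fun b hb c hc => ?_⟩
    rw [(by omega : m = (m - 1) + 1), List.take_succ_cons] at hdec hc
    rcases List.mem_cons.mp hc with rfl | hc
    · exact hle b hb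
    · exact le_trans (List.rel_of_pairwise_cons hdec hc) (hle b hb)
  · rwa [(by omega : D.length + m - 1 = D.length + (m - 1)), List.drop_length_add_append]

theorem isHookWord_append_of_pairwise_lt {D s : List ℕ} (hD : D.Pairwise (· ≥ ·))
    (hDpos : ∀ v ∈ D, 0 < v) (hspos : ∀ v ∈ s, 0 < v) (hs : s.Pairwise (· < ·))
    (hlt : ∃ b ∈ D, ∀ c ∈ s, b < c) : IsHookWord (D ++ s) := by
  obtain ⟨b, hb, hbs⟩ := hlt
  obtain ⟨D, l, rfl⟩ := (List.eq_nil_or_concat D).resolve_left (List.ne_nil_of_mem hb)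
  rw [List.concat_eq_append] at hD hDpos hb ⊢
  have hlb : l ≤ b := by
    rcases List.mem_append.mp hb with hb | hb
    · exact (List.pairwise_append.mp hD).2.2 b hb l (List.mem_singleton_self l)
    · rw [List.mem_singleton.mp hb]
  refine isHookWord_iff.mpr ⟨fun v hv => ?_, D.length + 1, by omega, by simp, ?_, ?_⟩
  · rcases List.mem_append.mp hv with hv | hv
    exacts [hDpos v hv, hspos v hv]
  · rwa [List.take_left' (by simp)]
  · rw [Nat.add_sub_cancel, List.append_assoc, List.drop_left]
    exact List.pairwise_cons.mpr ⟨fun c hc => hlb.trans_lt (hbs c hc), hs⟩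

theorem length_le_of_isMaxHookSubwordIn {u v D : List ℕ} (hmax : IsMaxHookSubwordIn u (v ++ u))
    (hD : D.Sublist v) {j : ℕ} (hs : IsHookWord (D ++ u.drop j)) : D.length ≤ j := by
  have := hmax.2.2 _ (hD.append (List.drop_sublist j u)) hs
  simp only [List.length_append, List.length_drop] at this
  omega

def IsDistribution (lam : List ℕ) (T : ℕ × ℕ → Finset ℕ) (d : ℕ × ℕ → ℕ) : Prop :=
  ∀ i j, InSD lam i j → d (i, j) ∈ T (i, j)

theorem IsDistribution.update (hd : IsDistribution lam T d) {b : ℕ × ℕ} {v : ℕ}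
    (hv : v ∈ T b) : IsDistribution lam T (Function.update d b v) := by
  intro i j h
  by_cases hb : (i, j) = b
  · subst hb; simpa using hv
  · simpa [Function.update_of_ne hb] using hd i j h

theorem exists_isDistribution (hT : IsSetDecompTab lam T) (g : ℕ × ℕ → ℕ) :
    ∃ d, IsDistribution lam T d ∧ ∀ b, g b ∈ T b → d b = g b := by
  classical
  refine ⟨fun b => if g b ∈ T b then g b else if h : (T b).Nonempty then h.choose else 0,
    fun i j h => ?_, fun b hb => if_pos hb⟩
  have hne := (hT.1 i j h).1
  dsimp only
  split_ifs with hg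
  exacts [hg, hne.choose_spec]

theorem length_rowWord (lam : List ℕ) (d : ℕ × ℕ → ℕ) (r : ℕ) :
    (rowWord lam d r).length = lam.getD (r - 1) 0 := by
  simp [rowWord]

theorem getElem_rowWord (lam : List ℕ) (d : ℕ × ℕ → ℕ) (r : ℕ) {j : ℕ}
    (hj : j < (rowWord lam d r).length) : (rowWord lam d r)[j] = d (r, r + j) := by
  simp [rowWord]

theorem map_sublist_rowWord {r : ℕ} {q : List ℕ} (hq : q.Pairwise (· < ·))
    (hqlt : ∀ j ∈ q, j < lam.getD (r - 1) 0) :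
    (q.map fun j => d (r, r + j)).Sublist (rowWord lam d r) := by
  refine List.Sublist.map _ (List.sublist_of_subperm_of_pairwise ?_ hq List.pairwise_lt_range)
  exact List.subperm_of_subset (hq.imp ne_of_lt) fun j hj => List.mem_range.mpr (hqlt j hj)

/-- Row `r + 1` is itself a hook subword of `ρ_{r+1} ρ_r`. -/
theorem getD_le_getD_of_isSetDecompTab (hT : IsSetDecompTab lam T) {r : ℕ} (hr : 1 ≤ r)
    (hrℓ : r + 1 ≤ lam.length) : lam.getD r 0 ≤ lam.getD (r - 1) 0 := by
  obtain ⟨d, hd, -⟩ := exists_isDistribution hT 0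
  have hDT := hT.2 d hd
  have := (hDT.2 r hr hrℓ).2.2 _ (List.sublist_append_left _ _) (hDT.1 (r + 1) (by omega) hrℓ)
  simpa [length_rowWord] using this

structure IsRun (lam : List ℕ) (d : ℕ × ℕ → ℕ) (r i : ℕ) (q : List ℕ) : Prop where
  sorted : q.Pairwise (· < ·)
  lt_length : ∀ j ∈ q, j < lam.getD (r - 1) 0
  antitone : q.Pairwise fun j j' => d (r, r + j') ≤ d (r, r + j)
  le : ∀ j ∈ q, i ≤ d (r, r + j)
  exists_eq : ∃ j ∈ q, d (r, r + j) = i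

theorem isRun_of_forall_eq {r i : ℕ} {q : List ℕ} (hq : q.Pairwise (· < ·))
    (hqlt : ∀ j ∈ q, j < lam.getD (r - 1) 0) (hval : ∀ j ∈ q, d (r, r + j) = i)
    (hne : q ≠ []) : IsRun lam d r i q where
  sorted := hq
  lt_length := hqlt
  antitone := hq.imp_of_mem fun ha hb _ => ((hval _ hb).trans (hval _ ha).symm).le
  le j hj := (hval j hj).ge
  exists_eq := (List.exists_mem_of_ne_nil q hne).imp fun j hj => ⟨hj, hval j hj⟩

/-- The start of row `r` up to `e` is weakly decreasing, since row `r` is a hook word in which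
`d (r, r + e)` is followed by a letter not exceeding it. -/
theorem IsRun.range_append (hT : IsSetDecompTab lam T) (hd : IsDistribution lam T d) {r i e : ℕ}
    {K : List ℕ} (hr : 1 ≤ r) (hrℓ : r ≤ lam.length) (hK : IsRun lam d r i K)
    (he : ∀ j ∈ K, e < j) (hdom : ∀ j ∈ K, d (r, r + j) ≤ d (r, r + e)) :
    IsRun lam d r i (List.range (e + 1) ++ K) := by
  obtain ⟨t, htK, hti⟩ := hK.exists_eq
  have ht : t < (rowWord lam d r).length := by rw [length_rowWord]; exact hK.lt_length t htK
  have hpre := IsHookWord.pairwise_take_of_le ((hT.2 d hd).1 r hr hrℓ) (he t htK) ht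
    (by simpa [getElem_rowWord] using hdom t htK)
  rw [rowWord, ← List.map_take, List.take_range, List.pairwise_map,
    min_eq_left (by rw [length_rowWord] at ht; have := he t htK; omega)] at hpre
  have hle : ∀ a ∈ List.range (e + 1), d (r, r + e) ≤ d (r, r + a) := by
    rw [List.range_succ, List.pairwise_append] at hpre
    intro a ha
    rcases List.mem_append.mp (List.range_succ ▸ ha) with ha | ha
    · exact hpre.2.2 a ha e (List.mem_singleton_self e)
    · rw [List.mem_singleton.mp ha]
  have hie : i ≤ d (r, r + e) := hti ▸ hdom t htK
  refine ⟨List.pairwise_append.mpr ⟨List.pairwise_lt_range, hK.sorted, fun a ha b hb => ?_⟩,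
    fun j hj => ?_, List.pairwise_append.mpr ⟨hpre, hK.antitone, fun a ha b hb => ?_⟩,
    fun j hj => ?_, ⟨t, List.mem_append_right _ htK, hti⟩⟩
  · have := he b hb; have := List.mem_range.mp ha; omega
  · rcases List.mem_append.mp hj with hj | hj
    · have := List.mem_range.mp hj; have := he t htK; have := hK.lt_length t htK; omega
    · exact hK.lt_length j hj
  · exact (hdom b hb).trans (hle a ha)
  · rcases List.mem_append.mp hj with hj | hj
    · exact hie.trans (hle j hj)
    · exact hK.le j hj

section RowAbove

variable (hT : IsSetDecompTab lam T) {r : ℕ} (hr : 1 ≤ r) (hrℓ : r + 1 ≤ lam.length)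
  {i : ℕ} {q : List ℕ}
include hT hr hrℓ

theorem length_le_of_isHookWord_append_drop (hd : IsDistribution lam T d)
    (hq : q.Pairwise (· < ·)) (hqlt : ∀ j ∈ q, j < lam.getD (r + 1 - 1) 0) {j₀ : ℕ}
    (hs : IsHookWord ((q.map fun j => d (r + 1, r + 1 + j)) ++ (rowWord lam d r).drop j₀)) :
    q.length ≤ j₀ := by
  simpa using
    length_le_of_isMaxHookSubwordIn ((hT.2 d hd).2 r hr hrℓ) (map_sublist_rowWord hq hqlt) hs

theorem IsRun.pos_of_mem_map (hd : IsDistribution lam T d) (hq : IsRun lam d (r + 1) i q) :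
    ∀ v ∈ q.map fun j => d (r + 1, r + 1 + j), 0 < v := fun v hv =>
  ((hT.2 d hd).1 (r + 1) (by omega) hrℓ).1 v
    ((map_sublist_rowWord hq.sorted hq.lt_length).subset hv)

theorem IsRun.length_le (hq : IsRun lam d (r + 1) i q) :
    q.length ≤ lam.getD (r - 1) 0 := by
  have := (map_sublist_rowWord (d := d) hq.sorted hq.lt_length).length_le
  simp only [List.length_map, length_rowWord, Nat.add_sub_cancel] at this
  exact this.trans (getD_le_getD_of_isSetDecompTab hT hr hrℓ)

theorem IsRun.lt_of_mem_above (hd : IsDistribution lam T d) (hq : IsRun lam d (r + 1) i q)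
    {j₀ β : ℕ} (hj₀ : j₀ < q.length) (hβ : β ∈ T (r, r + j₀)) : i < β := by
  by_contra! hβi
  -- choosing `β` at `(r, r + j₀)`, the run followed by the rest of row `r` from `j₀` on would be
  -- a hook subword of `ρ_{r+1} ρ_r` longer than `ρ_r`
  set d' := Function.update d (r, r + j₀) β
  have hd' : IsDistribution lam T d' := hd.update hβ
  have hmap : (q.map fun j => d' (r + 1, r + 1 + j)) = q.map fun j => d (r + 1, r + 1 + j) :=
    List.map_congr_left fun j _ => Function.update_of_ne (by simp) _ _
  have hj : j₀ < (rowWord lam d' r).length := by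
    have := hq.length_le hT hr hrℓ
    rw [length_rowWord]; omega
  refine (not_le.mpr hj₀) (length_le_of_isHookWord_append_drop hT hr hrℓ hd' hq.sorted
    hq.lt_length ?_)
  rw [hmap, List.drop_eq_getElem_cons hj]
  refine isHookWord_append_cons (List.pairwise_map.mpr hq.antitone)
    (hq.pos_of_mem_map hT hr hrℓ hd) ?_ ?_
  · rw [← List.drop_eq_getElem_cons hj]
    exact IsHookWord.drop ((hT.2 d' hd').1 r hr (by omega)) hj
  · simpa [getElem_rowWord, d'] using fun j hj => hβi.trans (hq.le j hj)

theorem IsRun.le_succ_of_mem_above (hd : IsDistribution lam T d) (hq : IsRun lam d (r + 1) i q)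
    {j₀ β : ℕ} (hj₀ : j₀ + 1 < q.length) (hi : i + 1 ∈ T (r, r + j₀))
    (hβ : β ∈ T (r, r + (j₀ + 1))) : β ≤ i + 1 := by
  by_contra! hβi
  -- choosing `i + 1` and then `β`, row `r` increases strictly from `j₀` on, and the run glued
  -- to it is again too long a hook subword
  set d' := Function.update (Function.update d (r, r + j₀) (i + 1)) (r, r + (j₀ + 1)) β
  have hd' : IsDistribution lam T d' := (hd.update hi).update hβ
  have hmap : (q.map fun j => d' (r + 1, r + 1 + j)) = q.map fun j => d (r + 1, r + 1 + j) :=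
    List.map_congr_left fun j _ => by simp [d', Function.update_of_ne]
  have hj : j₀ + 1 < (rowWord lam d' r).length := by
    have := hq.length_le hT hr hrℓ
    rw [length_rowWord]; omega
  have hinc := IsHookWord.pairwise_drop_of_lt ((hT.2 d' hd').1 r hr (by omega)) hj
    (by simp [getElem_rowWord, d']; omega)
  refine (not_le.mpr (by omega : j₀ < q.length)) (length_le_of_isHookWord_append_drop hT hr
    hrℓ hd' hq.sorted hq.lt_length ?_)
  rw [hmap]
  refine isHookWord_append_of_pairwise_lt (List.pairwise_map.mpr hq.antitone)
    (hq.pos_of_mem_map hT hr hrℓ hd) (fun v hv => ((hT.2 d' hd').1 r hr (by omega)).1 v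
      (List.mem_of_mem_drop hv)) hinc ?_
  obtain ⟨j, hjq, hji⟩ := hq.exists_eq
  refine ⟨_, List.mem_map_of_mem (f := fun j => d (r + 1, r + 1 + j)) hjq, fun c hc => ?_⟩
  rw [List.drop_eq_getElem_cons (by omega)] at hinc hc
  rcases List.mem_cons.mp hc with rfl | hc
  · simp [getElem_rowWord, d']; omega
  · have := List.rel_of_pairwise_cons hinc hc
    simp [getElem_rowWord, d'] at this; omega

theorem IsRun.succ_mem_above (hd : IsDistribution lam T d) (hq : IsRun lam d (r + 1) i q)
    {j₀ j : ℕ} (hi : i + 1 ∈ T (r, r + j₀)) (hj₀ : j₀ ≤ j) (hj : j < q.length) :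
    i + 1 ∈ T (r, r + j) := by
  induction j, hj₀ using Nat.le_induction with
  | base => exact hi
  | succ j _ ih =>
    have hbox : InSD lam r (r + (j + 1)) := by
      have := hq.length_le hT hr hrℓ
      exact ⟨hr, by omega, by omega, by omega⟩
    obtain ⟨β, hβ⟩ := (hT.1 _ _ hbox).1
    have h1 := hq.le_succ_of_mem_above hT hr hrℓ hd hj (ih (by omega)) hβ
    have h2 := hq.lt_of_mem_above hT hr hrℓ hd hj hβ
    rwa [(by omega : β = i + 1)] at hβ

theorem IsRun.countP_above_add_le (hd : IsDistribution lam T d) (hq : IsRun lam d (r + 1) i q)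
    {j₀ : ℕ} (hj₀ : j₀ ≤ q.length) (hi : i + 1 ∈ T (r, r + j₀)) :
    (List.range' 0 q.length).countP (fun j => i ∈ T (r, r + j)) + (q.length - j₀) ≤
      (List.range' 0 q.length).countP fun j => i + 1 ∈ T (r, r + j) := by
  have h₀ : (List.range' 0 q.length).countP (fun j => i ∈ T (r, r + j)) = 0 :=
    List.countP_eq_zero.mpr fun j hj hij => lt_irrefl i <| hq.lt_of_mem_above hT hr hrℓ hd
      (j₀ := j) (by have := List.mem_range'_1.mp hj; omega) (by simpa using hij)
  have hsplit := List.range'_append_1 (s := 0) (m := j₀) (n := q.length - j₀)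
  rw [Nat.zero_add, Nat.add_sub_cancel' hj₀] at hsplit
  rw [h₀, Nat.zero_add, ← hsplit, List.countP_append]
  refine le_add_left (le_of_eq ?_)
  rw [List.countP_eq_length.mpr fun j hj => ?_, List.length_range']
  have := List.mem_range'_1.mp hj
  simpa using hq.succ_mem_above hT hr hrℓ hd (j := j) hi this.1 (by omega)

end RowAbove

def boxWord (T : ℕ × ℕ → Finset ℕ) (b : ℕ × ℕ) : List ℕ := ((T b).sort (· ≤ ·)).reverse

def readWord (T : ℕ × ℕ → Finset ℕ) (bs : List (ℕ × ℕ)) : List ℕ := bs.flatMap (boxWord T)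

def rowSeg (r s n : ℕ) : List (ℕ × ℕ) := (List.range' s n).reverse.map fun j => (r, r + j)

theorem readWord_append (T : ℕ × ℕ → Finset ℕ) (bs bs' : List (ℕ × ℕ)) :
    readWord T (bs ++ bs') = readWord T bs ++ readWord T bs' :=
  List.flatMap_append

theorem count_boxWord (T : ℕ × ℕ → Finset ℕ) (b : ℕ × ℕ) (a : ℕ) :
    (boxWord T b).count a = if a ∈ T b then 1 else 0 := by
  rw [boxWord, List.count_reverse]
  split_ifs with h
  · exact List.count_eq_one_of_mem (Finset.sort_nodup _ _) ((Finset.mem_sort _).mpr h)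
  · exact List.count_eq_zero.mpr fun h' => h ((Finset.mem_sort _).mp h')

theorem count_readWord (T : ℕ × ℕ → Finset ℕ) (bs : List (ℕ × ℕ)) (a : ℕ) :
    (readWord T bs).count a = bs.countP fun b => a ∈ T b := by
  induction bs with
  | nil => rfl
  | cons b bs ih =>
    simp only [readWord, List.flatMap_cons, List.count_append, List.countP_cons] at ih ⊢
    rw [ih, count_boxWord]
    split_ifs <;> simp_all [Nat.add_comm]

theorem count_readWord_rowSeg (T : ℕ × ℕ → Finset ℕ) (r s n a : ℕ) :
    (readWord T (rowSeg r s n)).count a = (List.range' s n).countP fun j => a ∈ T (r, r + j) := by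
  rw [count_readWord, rowSeg, List.countP_map, List.countP_reverse]
  rfl

theorem rowSeg_add (r s m n : ℕ) : rowSeg r s (m + n) = rowSeg r (s + m) n ++ rowSeg r s m := by
  rw [rowSeg, rowSeg, rowSeg, ← List.map_append, ← List.reverse_append, List.range'_append_1]

theorem revrowBoxes_eq (lam : List ℕ) :
    revrowBoxes lam = (List.range lam.length).flatMap fun k => rowSeg (k + 1) 0 (lam.getD k 0) := by
  simp [revrowBoxes, rowSeg, List.range_eq_range']

theorem nodup_revrowBoxes (lam : List ℕ) : (revrowBoxes lam).Nodup := by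
  rw [revrowBoxes_eq, List.nodup_flatMap]
  refine ⟨fun k _ => ?_, List.nodup_range.pairwise_of_forall_ne fun k _ k' _ hkk' => ?_⟩
  · exact List.Nodup.map (fun j j' h => by simpa using h) (List.nodup_reverse.mpr List.nodup_range')
  · simp only [Function.onFun, List.disjoint_left, rowSeg, List.mem_map]
    rintro _ ⟨j, -, rfl⟩ ⟨j', -, h⟩
    simp only [Prod.mk.injEq] at h
    omega

theorem inSD_of_mem_revrowBoxes {b : ℕ × ℕ} (hb : b ∈ revrowBoxes lam) : InSD lam b.1 b.2 := by
  simp only [revrowBoxes_eq, rowSeg, List.mem_flatMap, List.mem_range, List.mem_map,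
    List.mem_reverse, List.mem_range'_1] at hb
  obtain ⟨k, hk, j, hj, rfl⟩ := hb
  exact ⟨by omega, hk, by omega, by rw [Nat.add_sub_cancel]; omega⟩

theorem revrowBoxes_eq_append {r N c : ℕ} (hr : 1 ≤ r) (hrℓ : r + 1 ≤ lam.length)
    (hN : N ≤ lam.getD (r - 1) 0) (hc : c < lam.getD r 0) : ∃ P Q, revrowBoxes lam =
      P ++ (rowSeg r 0 N ++ rowSeg (r + 1) (c + 1) (lam.getD r 0 - (c + 1))) ++
        (r + 1, r + 1 + c) :: Q := by
  obtain ⟨s, rfl⟩ : ∃ s, r = s + 1 := ⟨r - 1, by omega⟩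
  rw [Nat.add_sub_cancel] at hN
  obtain ⟨k, hk⟩ : ∃ k, lam.length = s + (1 + (1 + k)) := ⟨lam.length - s - 2, by omega⟩
  have hrange :
      List.range lam.length = List.range s ++ (s :: (s + 1) :: List.range' (s + 2) k) := by
    rw [hk, List.range_eq_range', ← List.range'_append_1, ← List.range'_append_1,
      ← List.range'_append_1]
    simp [List.range_eq_range', Nat.add_assoc]
  have hrow₁ : rowSeg (s + 1) 0 (lam.getD s 0) =
      rowSeg (s + 1) N (lam.getD s 0 - N) ++ rowSeg (s + 1) 0 N := by
    have h := rowSeg_add (s + 1) 0 N (lam.getD s 0 - N)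
    rwa [Nat.zero_add, Nat.add_sub_cancel' hN] at h
  have hrow₂ : rowSeg (s + 2) 0 (lam.getD (s + 1) 0) =
      rowSeg (s + 2) (c + 1) (lam.getD (s + 1) 0 - (c + 1)) ++ (s + 2, s + 2 + c) ::
        rowSeg (s + 2) 0 c := by
    have h₁ := rowSeg_add (s + 2) 0 c (1 + (lam.getD (s + 1) 0 - (c + 1)))
    have h₂ := rowSeg_add (s + 2) c 1 (lam.getD (s + 1) 0 - (c + 1))
    rw [(by omega : c + (1 + (lam.getD (s + 1) 0 - (c + 1))) = lam.getD (s + 1) 0)] at h₁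
    simp_all [rowSeg]
  refine ⟨(List.range s).flatMap (fun k => rowSeg (k + 1) 0 (lam.getD k 0)) ++
    rowSeg (s + 1) N (lam.getD s 0 - N), rowSeg (s + 2) 0 c ++
      (List.range' (s + 2) k).flatMap (fun k => rowSeg (k + 1) 0 (lam.getD k 0)), ?_⟩
  rw [revrowBoxes_eq, hrange, List.flatMap_append, List.flatMap_cons, List.flatMap_cons, hrow₁,
    hrow₂]
  simp

theorem pairwise_boxWord (T : ℕ × ℕ → Finset ℕ) (b : ℕ × ℕ) :
    (boxWord T b).Pairwise (· > ·) :=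
  List.pairwise_reverse.mpr (Finset.sortedLT_sort _).pairwise

theorem exists_take_revrowWord {p : ℕ} (hp : p < (revrowWord lam T).length) :
    ∃ B₁ B₂ k, ∃ hk : k < (boxWord T ((revrowEntries lam T).getD p ((0, 0), 0)).1).length,
      revrowBoxes lam = B₁ ++ ((revrowEntries lam T).getD p ((0, 0), 0)).1 :: B₂ ∧
      (revrowWord lam T).take p =
        readWord T B₁ ++ (boxWord T ((revrowEntries lam T).getD p ((0, 0), 0)).1).take k ∧
      (revrowWord lam T)[p] = (boxWord T ((revrowEntries lam T).getD p ((0, 0), 0)).1)[k] := by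
  set g : ℕ × ℕ → List ((ℕ × ℕ) × ℕ) := fun b => (boxWord T b).map (b, ·)
  have hsnd : ∀ B, (B.flatMap g).map Prod.snd = readWord T B := fun B => by
    simp [readWord, List.map_flatMap, g, Function.comp_def]
  have hE : revrowEntries lam T = (revrowBoxes lam).flatMap g := rfl
  have hpE : p < (revrowEntries lam T).length := by simpa [revrowWord] using hp
  obtain ⟨B₁, b, B₂, k, hk, hB, htake, hget⟩ :=
    List.exists_of_lt_length_flatMap g (revrowBoxes lam) (hE ▸ hpE)
  have hb : ((revrowEntries lam T).getD p ((0, 0), 0)).1 = b := by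
    rw [List.getD_eq_getElem _ _ hpE]
    have : (revrowEntries lam T)[p] = (g b)[k] := hget
    simp [this, g]
  rw [hb]
  refine ⟨B₁, B₂, k, by simpa [g] using hk, hB, ?_, ?_⟩
  · rw [revrowWord, ← List.map_take, hE, htake, List.map_append, hsnd, List.map_take]
    simp [g, Function.comp_def]
  · simp only [revrowWord, List.getElem_map, hE, hget, g]

theorem count_succ_le_count_of_unpairedLow {i p : ℕ} (hp : UnpairedLow i (revrowWord lam T) p)
    {P S Q : List (ℕ × ℕ)}
    (hsplit : revrowBoxes lam = P ++ S ++ ((revrowEntries lam T).getD p ((0, 0), 0)).1 :: Q) :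
    (readWord T S).count (i + 1) ≤ (readWord T S).count i := by
  obtain ⟨hp, hpi, hopen⟩ := hp
  obtain ⟨B₁, B₂, k, hk, hB, htake, hget⟩ := exists_take_revrowWord hp
  set b := ((revrowEntries lam T).getD p ((0, 0), 0)).1
  have hnd := nodup_revrowBoxes lam
  rw [hB, List.nodup_middle, List.nodup_cons, List.mem_append, not_or] at hnd
  obtain ⟨hPS, -, -⟩ := (List.append_cons_inj_of_notMem hnd.1.1 hnd.1.2).mp (hB.symm.trans hsplit)
  rw [List.getD_eq_getElem _ _ hp, hget] at hpi
  have hi : i ∉ (boxWord T b).take k := fun h => by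
    have hmem : i ∈ (boxWord T b).drop k := by
      rw [List.drop_eq_getElem_cons hk, hpi]; exact List.mem_cons_self
    exact lt_irrefl i ((pairwise_boxWord T b).rel_of_mem_take_of_mem_drop h hmem)
  rw [htake, hPS, readWord, List.flatMap_append, List.append_assoc] at hopen
  have := count_succ_le_count_of_openCount_eq_zero hopen
  rw [List.count_append, List.count_append, List.count_eq_zero.mpr hi] at this
  exact le_of_add_le_of_nonneg_left this (Nat.zero_le _)

theorem mem_of_unpairedLow {i p : ℕ} (hp : UnpairedLow i (revrowWord lam T) p) :
    ((revrowEntries lam T).getD p ((0, 0), 0)).1 ∈ revrowBoxes lam ∧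
      i ∈ T ((revrowEntries lam T).getD p ((0, 0), 0)).1 := by
  obtain ⟨B₁, B₂, k, hk, hB, -, hget⟩ := exists_take_revrowWord hp.1
  refine ⟨hB ▸ List.mem_append_right _ List.mem_cons_self, ?_⟩
  have hi : i ∈ boxWord T ((revrowEntries lam T).getD p ((0, 0), 0)).1 := by
    rw [← hp.2.1, List.getD_eq_getElem _ _ hp.1, hget]; exact List.getElem_mem hk
  simpa [boxWord] using hi

def rightOffsets (lam : List ℕ) (T : ℕ × ℕ → Finset ℕ) (a r c : ℕ) : List ℕ :=
  (List.range' (c + 1) (lam.getD r 0 - (c + 1))).filter fun j => a ∈ T (r + 1, r + 1 + j)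

theorem countP_add_length_le_of_unpairedLow {i p r c N : ℕ}
    (hp : UnpairedLow i (revrowWord lam T) p)
    (hxy : ((revrowEntries lam T).getD p ((0, 0), 0)).1 = (r + 1, r + 1 + c)) (hr : 1 ≤ r)
    (hN : N ≤ lam.getD (r - 1) 0) :
    (List.range' 0 N).countP (fun j => i + 1 ∈ T (r, r + j)) +
        (rightOffsets lam T (i + 1) r c).length ≤
      (List.range' 0 N).countP (fun j => i ∈ T (r, r + j)) + (rightOffsets lam T i r c).length := by
  have hbox := inSD_of_mem_revrowBoxes (mem_of_unpairedLow hp).1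
  rw [hxy] at hbox
  obtain ⟨-, hrℓ, -, hc⟩ := hbox
  rw [Nat.add_sub_cancel] at hc
  obtain ⟨P, Q, hsplit⟩ := revrowBoxes_eq_append hr hrℓ hN (c := c) (by omega)
  rw [← hxy] at hsplit
  have := count_succ_le_count_of_unpairedLow hp hsplit
  simpa only [readWord_append, List.count_append, count_readWord_rowSeg, rightOffsets,
    ← List.countP_eq_length_filter] using this

section RunsOfI

variable {r i c : ℕ} (hc : c < lam.getD r 0)
  (hval : ∀ j, c ≤ j → i ∈ T (r + 1, r + 1 + j) → d (r + 1, r + 1 + j) = i)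
include hc hval

theorem forall_mem_rightOffsets :
    ∀ j ∈ rightOffsets lam T i r c, c < j ∧ j < lam.getD r 0 ∧ d (r + 1, r + 1 + j) = i := by
  intro j hj
  simp only [rightOffsets, List.mem_filter, List.mem_range'_1, decide_eq_true_eq] at hj
  exact ⟨by omega, by omega, hval j (by omega) hj.2⟩

theorem isRun_rightOffsets (hne : rightOffsets lam T i r c ≠ []) :
    IsRun lam d (r + 1) i (rightOffsets lam T i r c) :=
  isRun_of_forall_eq (List.Pairwise.filter _ List.pairwise_lt_range')
    (fun j hj => by rw [Nat.add_sub_cancel]; exact (forall_mem_rightOffsets hc hval j hj).2.1)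
    (fun j hj => (forall_mem_rightOffsets hc hval j hj).2.2) hne

theorem isRun_cons_rightOffsets (hiy : i ∈ T (r + 1, r + 1 + c)) :
    IsRun lam d (r + 1) i (c :: rightOffsets lam T i r c) := by
  have hJ := forall_mem_rightOffsets hc hval
  refine isRun_of_forall_eq (List.pairwise_cons.mpr ⟨fun j hj => (hJ j hj).1,
    List.Pairwise.filter _ List.pairwise_lt_range'⟩) (fun j hj => ?_) (fun j hj => ?_)
    (List.cons_ne_nil _ _) <;> rcases List.mem_cons.mp hj with rfl | hj
  · rwa [Nat.add_sub_cancel]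
  · rw [Nat.add_sub_cancel]; exact (hJ j hj).2.1
  · exact hval _ le_rfl hiy
  · exact (hJ j hj).2.2

end RunsOfI

section Configurations

variable (hT : IsSetDecompTab lam T) {i p r c : ℕ} (hp : UnpairedLow i (revrowWord lam T) p)
  (hxy : ((revrowEntries lam T).getD p ((0, 0), 0)).1 = (r + 1, r + 1 + c))
include hp hxy

theorem lt_length_and_mem_of_unpairedLow :
    r + 1 ≤ lam.length ∧ c < lam.getD r 0 ∧ i ∈ T (r + 1, r + 1 + c) := by
  obtain ⟨hbox, hiy⟩ := mem_of_unpairedLow hp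
  rw [hxy] at hbox hiy
  obtain ⟨-, hrℓ, -, hc⟩ := inSD_of_mem_revrowBoxes hbox
  exact ⟨hrℓ, by simp only [Nat.add_sub_cancel] at hc; omega, hiy⟩

variable (hr : 1 ≤ r)
include hT hr

theorem succ_not_mem_diag_of_unpairedLow : i + 1 ∉ T (r, r) := by
  intro hi
  obtain ⟨hrℓ, hc, hiy⟩ := lt_length_and_mem_of_unpairedLow hp hxy
  obtain ⟨d, hd, hdi⟩ := exists_isDistribution hT fun _ => i
  have hq := isRun_cons_rightOffsets hc (fun j _ => hdi _) hiy
  have hrun := hq.countP_above_add_le hT hr hrℓ hd (j₀ := 0) (by simp) (by simpa using hi)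
  have hcount := countP_add_length_le_of_unpairedLow hp hxy hr (hq.length_le hT hr hrℓ)
  simp only [List.length_cons] at hrun hcount
  omega

theorem succ_lt_of_mem_above_of_unpairedLow {e : ℕ} (hce : c < e) (he : e < lam.getD r 0)
    (hi : i + 1 ∈ T (r + 1, r + 1 + e)) : ∀ β ∈ T (r, r + 1 + c), i + 1 < β := by
  intro β hβ
  by_contra! hβi
  obtain ⟨hrℓ, hc, hiy⟩ := lt_length_and_mem_of_unpairedLow hp hxy
  obtain ⟨d, hd, hdi⟩ := exists_isDistribution hT fun _ => i
  have hright : 0 < (rightOffsets lam T (i + 1) r c).length := List.length_pos_of_mem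
    (a := e) (List.mem_filter.mpr ⟨List.mem_range'_1.mpr ⟨by omega, by omega⟩, by simpa using hi⟩)
  have hcount N := countP_add_length_le_of_unpairedLow (N := N) hp hxy hr
  by_cases hJ : rightOffsets lam T i r c = []
  · have := hcount 0 (Nat.zero_le _)
    simp only [hJ, List.range'_zero, List.countP_nil, List.length_nil] at this
    omega
  have hJi := forall_mem_rightOffsets hc (fun j _ => hdi _)
  have hq := (isRun_rightOffsets hc (fun j _ => hdi _) hJ).range_append hT hd (by omega) hrℓ
    (fun j hj => (hJi j hj).1) (fun j hj => by rw [hdi _ hiy, (hJi j hj).2.2])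
  have hβ' : β ∈ T (r, r + (c + 1)) := by rwa [(by omega : r + (c + 1) = r + 1 + c)]
  have hJlen := List.length_pos_iff.mpr hJ
  have := hq.lt_of_mem_above hT hr hrℓ hd (by simp; omega) hβ'
  have hrun := hq.countP_above_add_le hT hr hrℓ hd (by simp) (show i + 1 ∈ T (r, r + (c + 1)) by
    rwa [(by omega : β = i + 1)] at hβ')
  have := hcount _ (hq.length_le hT hr hrℓ)
  simp only [List.length_append, List.length_range] at hrun this
  omega

theorem lt_succ_of_mem_left_of_unpairedLow {e : ℕ} (hec : e < c)
    (hi : i + 1 ∈ T (r, r + 1 + e)) : ∀ δ ∈ T (r + 1, r + 1 + e), δ < i + 1 := by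
  intro δ hδ
  by_contra! hδi
  obtain ⟨hrℓ, hc, hiy⟩ := lt_length_and_mem_of_unpairedLow hp hxy
  obtain ⟨d, hd, hdi⟩ :=
    exists_isDistribution hT (Function.update (fun _ => i) (r + 1, r + 1 + e) δ)
  have hde : d (r + 1, r + 1 + e) = δ := by
    simpa using hdi (r + 1, r + 1 + e) (by simpa using hδ)
  have hval : ∀ j, c ≤ j → i ∈ T (r + 1, r + 1 + j) → d (r + 1, r + 1 + j) = i :=
    fun j hj hij => by
      have hne : (r + 1, r + 1 + j) ≠ (r + 1, r + 1 + e) := by simp; omega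
      rw [← Function.update_of_ne hne δ fun _ => i] at hij ⊢
      exact hdi _ hij
  have hJi := forall_mem_rightOffsets hc hval
  have hq := (isRun_cons_rightOffsets hc hval hiy).range_append hT hd (by omega) hrℓ (e := e)
    (fun j hj => by rcases List.mem_cons.mp hj with rfl | hj; exacts [hec, hec.trans (hJi j hj).1])
    (fun j hj => by
      rcases List.mem_cons.mp hj with rfl | hj
      · rw [hval _ le_rfl hiy, hde]; omega
      · rw [(hJi j hj).2.2, hde]; omega)
  have hrun := hq.countP_above_add_le hT hr hrℓ hd (j₀ := e + 1) (by simp)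
    (by rwa [(by omega : r + (e + 1) = r + 1 + e)])
  have hcount := countP_add_length_le_of_unpairedLow hp hxy hr (hq.length_le hT hr hrℓ)
  simp only [List.length_append, List.length_range, List.length_cons] at hrun hcount
  omega

end Configurations

end SetDecompTab

open SetDecompTab

theorem stmt5_general (n : ℕ) (lam : List ℕ) (i : ℕ) (T : ℕ × ℕ → Finset ℕ)
    (hT : IsSetDecompTabN n lam T) (p : ℕ) (hp : UnpairedLow i (revrowWord lam T) p)
    (x y : ℕ) (hxy : ((revrowEntries lam T).getD p ((0, 0), 0)).1 = (x, y)) :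
    ¬ (1 < x ∧ x ≤ y ∧ InSD lam (x - 1) (x - 1) ∧ i + 1 ∈ T (x - 1, x - 1)) ∧
    ¬ (1 < x ∧ x ≤ y ∧ ∃ z, y < z ∧ InSD lam (x - 1) y ∧ InSD lam x z ∧
        (T (x - 1, y)).min ≤ ((i + 1 : ℕ) : WithTop ℕ) ∧ i + 1 ∈ T (x, z)) ∧
    ¬ (1 < x ∧ x < y ∧ ∃ z, 1 < z ∧ z < y ∧ InSD lam x z ∧ InSD lam (x - 1) z ∧
        ((i + 1 : ℕ) : WithBot ℕ) ≤ (T (x, z)).max ∧ i + 1 ∈ T (x - 1, z)) := by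
  have hbox := inSD_of_mem_revrowBoxes (hxy ▸ (mem_of_unpairedLow hp).1)
  obtain ⟨r, rfl⟩ : ∃ r, x = r + 1 := ⟨x - 1, by have := hbox.1; omega⟩
  obtain ⟨c, rfl⟩ : ∃ c, y = r + 1 + c := ⟨y - (r + 1), by have := hbox.2.2.1; omega⟩
  simp only [Nat.add_sub_cancel]
  refine ⟨fun ⟨hr, _, _, hi⟩ => succ_not_mem_diag_of_unpairedLow hT.1 hp hxy (by omega) hi, ?_, ?_⟩
  · rintro ⟨hr, -, z, hcz, -, ⟨-, -, hz, hzℓ⟩, hmin, hi⟩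
    obtain ⟨e, rfl⟩ : ∃ e, z = r + 1 + e := ⟨z - (r + 1), by omega⟩
    obtain ⟨β, hβ, hβi⟩ := Finset.exists_le_of_min_le hmin
    rw [Nat.add_sub_cancel] at hzℓ
    exact (succ_lt_of_mem_above_of_unpairedLow hT.1 hp hxy (by omega) (by omega) (by omega) hi β
      hβ).not_ge hβi
  · rintro ⟨hr, -, z, -, hzy, ⟨-, -, hz, -⟩, -, hmax, hi⟩
    obtain ⟨e, rfl⟩ : ∃ e, z = r + 1 + e := ⟨z - (r + 1), by omega⟩
    obtain ⟨δ, hδ, hδi⟩ := Finset.exists_le_of_le_max hmax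
    exact (lt_succ_of_mem_left_of_unpairedLow hT.1 hp hxy (by omega) (by omega) hi δ hδ).not_ge
      hδi

/-- Lemma 4.2(1) of the paper: exclusion of configurations around the
box `(x,y)` of the last `i`-unpaired letter equal to `i`, when changing that `i` to
`i+1` fails to give a set-valued decomposition tableau. -/
theorem stmt5 (n : ℕ) (hn : 1 ≤ n) (lam : List ℕ) (hlam : IsStrictPartition lam)
    (hlen : lam.length ≤ n) (i : ℕ) (hi1 : 1 ≤ i) (hi2 : i < n)
    (T : ℕ × ℕ → Finset ℕ) (hT : IsSetDecompTabN n lam T)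
    (p : ℕ) (hp : UnpairedLow i (revrowWord lam T) p)
    (hlast : ∀ q, UnpairedLow i (revrowWord lam T) q → q ≤ p)
    (x y : ℕ) (hxy : ((revrowEntries lam T).getD p ((0, 0), 0)).1 = (x, y))
    (hfail : ¬ IsSetDecompTab lam
      (Function.update T (x, y) (insert (i + 1) ((T (x, y)).erase i)))) :
    ¬ (1 < x ∧ x ≤ y ∧ InSD lam (x - 1) (x - 1) ∧ i + 1 ∈ T (x - 1, x - 1)) ∧
    ¬ (1 < x ∧ x ≤ y ∧ ∃ z, y < z ∧ InSD lam (x - 1) y ∧ InSD lam x z ∧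
        (T (x - 1, y)).min ≤ ((i + 1 : ℕ) : WithTop ℕ) ∧ i + 1 ∈ T (x, z)) ∧
    ¬ (1 < x ∧ x < y ∧ ∃ z, 1 < z ∧ z < y ∧ InSD lam x z ∧ InSD lam (x - 1) z ∧
        ((i + 1 : ℕ) : WithBot ℕ) ≤ (T (x, z)).max ∧ i + 1 ∈ T (x - 1, z)) :=
  stmt5_general n lam i T hT p hp x y hxy
end

section
/- Let n ≥ 2 and let λ be a strict partition with at most n parts. The seminormal gl_n-crystal SetDecTab_n(λ), together with the operators e_1̄ and f_1̄, is a q_n-crystal: e_1̄ and f_1̄ map SetDecTab_n(λ) into SetDecTab_n(λ) ⊔ {0}; they commute with e_i and f_i and preserve the string lengths ε_i and φ_i for all 3 ≤ i ≤ n−1; and for T,U ∈ SetDecTab_n(λ) one has e_1̄(T) = U if and only if f_1̄(U) = T, in which case wt(U) = wt(T) + 𝐞_1 − 𝐞_2. -/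
open scoped Classical

/-!
Everything happens in the box `xy` holding the first letter `≤ 2` of the reading word: `e_1̄` and
`f_1̄` only trade a `2` there for a `1` and back (`SwapRel`). The letters read before it, i.e. those
to its right and those in the row above, are all at least `3`; and a word `u a v` with `u ≥ 1`,
`a ∈ {1, 2}`, `v ≥ 3` is a hook word, or a hook subword of maximal length, independently of which
of `1, 2` the letter `a` is. So the trade preserves every distribution being a decomposition
tableau. The operators `e_i`, `f_i` with `i ≥ 3` only look at the letters `i, i + 1` and only change
letters `≥ 3`, so they take a traded pair to a traded pair: this gives commutation and equal string
lengths.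
-/

section HookWords

lemma getD_append_cons_of_lt {α : Type*} {u v : List α} {x d : α} {j : ℕ} (h : j < u.length) :
    (u ++ x :: v).getD j d = u.getD j d :=
  List.getD_append _ _ _ _ h

lemma getD_append_cons_length {α : Type*} {u v : List α} {x d : α} :
    (u ++ x :: v).getD u.length d = x := by
  rw [List.getD_append_right _ _ _ _ le_rfl, Nat.sub_self]; rfl

lemma getD_append_cons_of_gt {α : Type*} {u v : List α} {x d : α} {j : ℕ} (h : u.length < j) :
    (u ++ x :: v).getD j d = v.getD (j - u.length - 1) d := by
  obtain ⟨m, rfl⟩ := Nat.exists_eq_add_of_lt h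
  rw [List.getD_append_right _ _ _ _ h.le, show u.length + m + 1 - u.length = m + 1 by omega,
    List.getD_cons_succ, Nat.add_sub_cancel]

lemma getD_mem {α : Type*} {l : List α} {d : α} {j : ℕ} (h : j < l.length) : l.getD j d ∈ l := by
  rw [List.getD_eq_getElem l d h]; exact List.getElem_mem h

def WeaklyDecreasing (u : List ℕ) : Prop := ∀ j, j + 1 < u.length → u.getD (j + 1) 0 ≤ u.getD j 0

def StrictlyIncreasing (v : List ℕ) : Prop := ∀ j, j + 1 < v.length → v.getD j 0 < v.getD (j + 1) 0

/-- Since `a ≤ 2` is smaller than the letters `≥ 3` after it, the valley of the hook word is at `a`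
or just before it. -/
lemma IsHookWord.weaklyDecreasing_and_strictlyIncreasing {u v : List ℕ} {a : ℕ}
    (hu : ∀ x ∈ u, 1 ≤ x) (hv : ∀ x ∈ v, 3 ≤ x) (ha : a ≤ 2) (h : IsHookWord (u ++ a :: v)) :
    WeaklyDecreasing u ∧ StrictlyIncreasing v := by
  obtain ⟨-, m, hm1, hmL, hdec, hinc⟩ := h
  simp only [List.length_append, List.length_cons] at hmL hinc
  constructor
  · intro j hj
    by_cases hjm : j + 1 < m
    · simpa only [getD_append_cons_of_lt hj, getD_append_cons_of_lt (show j < u.length by omega)]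
        using hdec j hjm
    · -- otherwise the last two letters of `u` and `a` would strictly increase
      have h1 := hinc (u.length - 1) (by omega) (by omega)
      have h2 := hinc (u.length - 2) (by omega) (by omega)
      rw [getD_append_cons_of_lt (by omega), show u.length - 1 + 1 = u.length by omega,
        getD_append_cons_length] at h1
      rw [getD_append_cons_of_lt (by omega), show u.length - 2 + 1 = u.length - 1 by omega,
        getD_append_cons_of_lt (by omega)] at h2
      have := hu _ (getD_mem (d := 0) (show u.length - 2 < u.length by omega))
      omega
  · intro j hj
    have hmk : m ≤ u.length + 1 := by
      by_contra hcon
      have h3 := hdec u.length (by omega)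
      rw [getD_append_cons_length, getD_append_cons_of_gt (by omega)] at h3
      have := hv _ (getD_mem (d := 0) (show u.length + 1 - u.length - 1 < v.length by omega))
      omega
    have h4 := hinc (u.length + 1 + j) (by omega) (by omega)
    rwa [getD_append_cons_of_gt (by omega), getD_append_cons_of_gt (by omega),
      show u.length + 1 + j - u.length - 1 = j by omega,
      show u.length + 1 + j + 1 - u.length - 1 = j + 1 by omega] at h4

lemma isHookWord_append_cons {u v : List ℕ} {a : ℕ} (hu : ∀ x ∈ u, 1 ≤ x)
    (hv : ∀ x ∈ v, 3 ≤ x) (ha1 : 1 ≤ a) (ha2 : a ≤ 2) (hdec : WeaklyDecreasing u)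
    (hinc : StrictlyIncreasing v) : IsHookWord (u ++ a :: v) := by
  have hlen : (u ++ a :: v).length = u.length + 1 + v.length := by simp; omega
  have hpos : ∀ x ∈ u ++ a :: v, 0 < x := by
    intro x hx
    rcases List.mem_append.1 hx with h | h | ⟨_, h⟩
    · exact hu x h
    · omega
    · exact (hv x h).trans_lt' (by norm_num)
  have hincr : ∀ j, u.length ≤ j → j + 1 < (u ++ a :: v).length →
      (u ++ a :: v).getD j 0 < (u ++ a :: v).getD (j + 1) 0 := by
    intro j hj1 hj2
    rcases hj1.lt_or_eq with h | rfl
    · rw [getD_append_cons_of_gt h, getD_append_cons_of_gt (by omega),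
        show j + 1 - u.length - 1 = (j - u.length - 1) + 1 by omega]
      exact hinc _ (by omega)
    · rw [getD_append_cons_length, getD_append_cons_of_gt (by omega)]
      have := hv _ (getD_mem (d := 0) (show u.length + 1 - u.length - 1 < v.length by omega))
      omega
  refine ⟨hpos, ?_⟩
  by_cases hC : u.length ≠ 0 ∧ u.getD (u.length - 1) 0 < a
  · refine ⟨u.length, by omega, by omega, fun j hj => ?_, fun j hj1 hj2 => ?_⟩
    · rw [getD_append_cons_of_lt (by omega), getD_append_cons_of_lt (by omega)]
      exact hdec j (by omega)
    · rcases (show j = u.length - 1 ∨ u.length ≤ j by omega) with rfl | h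
      · rw [getD_append_cons_of_lt (by omega), show u.length - 1 + 1 = u.length by omega,
          getD_append_cons_length]
        exact hC.2
      · exact hincr j h hj2
  · refine ⟨u.length + 1, by omega, by omega, fun j hj => ?_, fun j hj1 hj2 => ?_⟩
    · rcases (show j + 1 < u.length ∨ j + 1 = u.length by omega) with h | h
      · rw [getD_append_cons_of_lt h, getD_append_cons_of_lt (by omega)]
        exact hdec j h
      · rw [h, getD_append_cons_length, getD_append_cons_of_lt (by omega),
          show j = u.length - 1 by omega]
        omega
    · exact hincr j (by omega) hj2

lemma isHookWord_append_cons_congr {u v : List ℕ} {a b : ℕ} (hu : ∀ x ∈ u, 1 ≤ x)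
    (hv : ∀ x ∈ v, 3 ≤ x) (ha : a ≤ 2) (hb1 : 1 ≤ b) (hb2 : b ≤ 2)
    (h : IsHookWord (u ++ a :: v)) : IsHookWord (u ++ b :: v) :=
  let ⟨hdec, hinc⟩ := h.weaklyDecreasing_and_strictlyIncreasing hu hv ha
  isHookWord_append_cons hu hv hb1 hb2 hdec hinc

lemma hookSubword_length_le_of_replace {U V : List ℕ} {a b m : ℕ}
    (hU : ∀ x ∈ U, 1 ≤ x) (hV : ∀ x ∈ V, 3 ≤ x)
    (ha1 : 1 ≤ a) (ha2 : a ≤ 2) (hb : b ≤ 2)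
    (hbound : ∀ t, t.Sublist (U ++ a :: V) → IsHookWord t → t.length ≤ m)
    {t : List ℕ} (ht : t.Sublist (U ++ b :: V)) (hhook : IsHookWord t) : t.length ≤ m := by
  obtain ⟨t1, t2, rfl, h1, h2⟩ := List.sublist_append_iff.mp ht
  rcases List.sublist_cons_iff.mp h2 with h2' | ⟨t3, rfl, h3⟩
  · exact hbound _ ((h1.append h2').trans (.append (.refl U) (List.sublist_cons_self a V))) hhook
  · have hx1 : ∀ x ∈ t1, 1 ≤ x := fun x hx => hU x (h1.subset hx)
    have hx3 : ∀ x ∈ t3, 3 ≤ x := fun x hx => hV x (h3.subset hx)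
    simpa using hbound _ (h1.append (List.cons_sublist_cons.mpr h3))
      (isHookWord_append_cons_congr hx1 hx3 hb ha1 ha2 hhook)

end HookWords

section DecompositionTableaux

variable {lam : List ℕ} {d : ℕ × ℕ → ℕ}

lemma rowWord_update_of_ne {r c b i : ℕ} (h : i ≠ r) :
    rowWord lam (Function.update d (r, c) b) i = rowWord lam d i :=
  List.map_congr_left fun _ _ => Function.update_of_ne (by simp [h]) _ _

lemma mem_rowWord {i x : ℕ} (hi1 : 1 ≤ i) (hi2 : i ≤ lam.length) (hx : x ∈ rowWord lam d i) :
    ∃ j, InSD lam i j ∧ x = d (i, j) := by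
  simp only [rowWord, List.mem_map, List.mem_range] at hx
  obtain ⟨j, hj, rfl⟩ := hx
  exact ⟨i + j, ⟨hi1, hi2, by omega, by omega⟩, rfl⟩

lemma rowWord_update_split {r c b : ℕ} (hin : InSD lam r c) :
    ∃ u v, rowWord lam d r = u ++ d (r, c) :: v ∧
      rowWord lam (Function.update d (r, c) b) r = u ++ b :: v ∧
      (∀ x ∈ v, ∃ c', c < c' ∧ InSD lam r c' ∧ x = d (r, c')) := by
  obtain ⟨hr1, hr2, hrc, hcb⟩ := hin
  obtain ⟨k, hk⟩ : ∃ k, lam.getD (r - 1) 0 = c - r + 1 + k :=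
    ⟨lam.getD (r - 1) 0 - (c - r + 1), by omega⟩
  have split : ∀ e : ℕ × ℕ → ℕ, rowWord lam e r =
      (List.range (c - r)).map (fun j => e (r, r + j)) ++ e (r, c) ::
        (List.range k).map (fun t => e (r, c + 1 + t)) := by
    intro e
    unfold rowWord
    rw [hk, List.range_add, List.map_append, List.range_succ, List.map_append, List.map_map]
    simp only [List.map_cons, List.map_nil, List.append_assoc, List.singleton_append,
      show r + (c - r) = c by omega, Function.comp_def]
    congr 3; funext t; congr 2; omega
  have hne : ∀ c', c' ≠ c → Function.update d (r, c) b (r, c') = d (r, c') := fun c' h =>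
    Function.update_of_ne (by simp [h]) _ _
  refine ⟨_, _, split d, ?_, ?_⟩
  · rw [split, Function.update_self]
    congr 1
    · exact List.map_congr_left fun j hj => hne _ (by simp at hj; omega)
    · congr 1; exact List.map_congr_left fun t _ => hne _ (by omega)
  · simp only [List.mem_map, List.mem_range]
    rintro x ⟨t, ht, rfl⟩
    exact ⟨c + 1 + t, by omega, ⟨hr1, hr2, by omega, by omega⟩, rfl⟩

lemma IsMaxHookSubwordIn.replace {U V r r' : List ℕ} {a b : ℕ}
    (hU : ∀ x ∈ U, 1 ≤ x) (hV : ∀ x ∈ V, 3 ≤ x) (ha1 : 1 ≤ a) (ha2 : a ≤ 2) (hb : b ≤ 2)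
    (h : IsMaxHookSubwordIn r (U ++ a :: V)) (hsub : r'.Sublist (U ++ b :: V))
    (hhook : IsHookWord r') (hlen : r'.length = r.length) :
    IsMaxHookSubwordIn r' (U ++ b :: V) :=
  ⟨hsub, hhook, fun _ ht hh =>
    hlen ▸ hookSubword_length_le_of_replace hU hV ha1 ha2 hb h.2.2 ht hh⟩

lemma IsDecompTab.update_small {r c a b : ℕ} (hd : IsDecompTab lam d) (hin : InSD lam r c)
    (ha1 : 1 ≤ a) (ha2 : a ≤ 2) (hb1 : 1 ≤ b) (hb2 : b ≤ 2) (hda : d (r, c) = a)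
    (hpos : ∀ i j, InSD lam i j → 1 ≤ d (i, j))
    (hright : ∀ c', c < c' → InSD lam r c' → 3 ≤ d (r, c'))
    (habove : ∀ c', InSD lam (r - 1) c' → 3 ≤ d (r - 1, c')) :
    IsDecompTab lam (Function.update d (r, c) b) := by
  obtain ⟨u, v, hw, hw', hv⟩ := rowWord_update_split (b := b) (d := d) hin
  rw [hda] at hw
  have hrow_pos : ∀ i, 1 ≤ i → i ≤ lam.length → ∀ x ∈ rowWord lam d i, 1 ≤ x :=
    fun i hi1 hi2 x hx => by obtain ⟨j, hj, rfl⟩ := mem_rowWord hi1 hi2 hx; exact hpos _ _ hj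
  have hu1 : ∀ x ∈ u, 1 ≤ x := fun x hx =>
    hrow_pos r hin.1 hin.2.1 x (hw ▸ List.mem_append_left _ hx)
  have hv3 : ∀ x ∈ v, 3 ≤ x := fun x hx => by
    obtain ⟨c', hcc', hc', rfl⟩ := hv x hx; exact hright _ hcc' hc'
  have hrow : IsHookWord (u ++ b :: v) :=
    isHookWord_append_cons_congr hu1 hv3 ha2 hb1 hb2 (hw ▸ hd.1 r hin.1 hin.2.1)
  refine ⟨fun i hi1 hi2 => ?_, fun i hi1 hi2 => ?_⟩
  · rcases eq_or_ne i r with rfl | hir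
    · rw [hw']; exact hrow
    · rw [rowWord_update_of_ne hir]; exact hd.1 i hi1 hi2
  have hold := hd.2 i hi1 hi2
  rcases eq_or_ne i r with rfl | hir
  · rw [rowWord_update_of_ne (show i + 1 ≠ i by omega), hw', ← List.append_assoc]
    rw [hw, ← List.append_assoc] at hold
    exact hold.replace (List.forall_mem_append.mpr ⟨hrow_pos (i + 1) (by omega) hi2, hu1⟩) hv3
      ha1 ha2 hb2 (by rw [List.append_assoc]; exact List.sublist_append_right _ _) hrow (by simp)
  rcases eq_or_ne (i + 1) r with rfl | hir1
  · rw [rowWord_update_of_ne hir, hw', List.append_assoc, List.cons_append]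
    rw [hw, List.append_assoc, List.cons_append] at hold
    have hV : ∀ x ∈ v ++ rowWord lam d i, 3 ≤ x := List.forall_mem_append.mpr ⟨hv3, fun x hx => by
      obtain ⟨j, hj, rfl⟩ := mem_rowWord hi1 (by omega) hx
      exact habove _ (by simpa using hj)⟩
    exact hold.replace hu1 hV ha1 ha2 hb2
      (by rw [← List.cons_append, ← List.append_assoc]; exact List.sublist_append_right _ _)
      hold.2.1 rfl
  · rw [rowWord_update_of_ne hir, rowWord_update_of_ne hir1]
    exact hold

end DecompositionTableaux

section SetValued

variable {lam : List ℕ}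

lemma IsSetDecompTab.replace_small {T T' : ℕ × ℕ → Finset ℕ} {r c a b : ℕ} {X : Finset ℕ}
    (hT : IsSetDecompTab lam T) (hin : InSD lam r c)
    (ha1 : 1 ≤ a) (ha2 : a ≤ 2) (hb1 : 1 ≤ b) (hb2 : b ≤ 2)
    (hTrc : T (r, c) = insert a X) (hT'rc : T' (r, c) = insert b X)
    (hoff : ∀ z, z ≠ (r, c) → T' z = T z)
    (hright : ∀ c', c < c' → InSD lam r c' → ∀ v ∈ T (r, c'), 3 ≤ v)
    (habove : ∀ c', InSD lam (r - 1) c' → ∀ v ∈ T (r - 1, c'), 3 ≤ v) :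
    IsSetDecompTab lam T' := by
  have hX : X ⊆ T (r, c) := hTrc ▸ Finset.subset_insert a X
  refine ⟨fun i j hij => ?_, fun d' hd' => ?_⟩
  · rcases eq_or_ne (i, j) (r, c) with h | h
    · rw [h, hT'rc]
      refine ⟨Finset.insert_nonempty _ _, fun h0 => ?_⟩
      rcases Finset.mem_insert.mp h0 with h0 | h0
      · omega
      · exact (hT.1 r c hin).2 (hX h0)
    · rw [hoff _ h]; exact hT.1 i j hij
  by_cases hb : d' (r, c) = b
  · obtain ⟨d, hd⟩ : ∃ d, d = Function.update d' (r, c) a := ⟨_, rfl⟩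
    have hdT : ∀ i j, InSD lam i j → d (i, j) ∈ T (i, j) := by
      intro i j hij
      rcases eq_or_ne (i, j) (r, c) with h | h
      · rw [h, hd, Function.update_self, hTrc]; exact Finset.mem_insert_self a X
      · rw [hd, Function.update_of_ne h, ← hoff _ h]; exact hd' i j hij
    have hd'eq : d' = Function.update d (r, c) b := by
      rw [hd, Function.update_idem, ← hb, Function.update_eq_self]
    have hpos : ∀ i j, InSD lam i j → 1 ≤ d (i, j) := fun i j hij =>
      Nat.one_le_iff_ne_zero.mpr fun h0 => (hT.1 i j hij).2 (h0 ▸ hdT i j hij)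
    rw [hd'eq]
    refine (hT.2 d hdT).update_small hin ha1 ha2 hb1 hb2 (by rw [hd, Function.update_self]) hpos
      (fun c' hcc' hc' => hright c' hcc' hc' _ (hdT r c' hc'))
      (fun c' hc' => habove c' hc' _ (hdT (r - 1) c' hc'))
  · refine hT.2 d' fun i j hij => ?_
    rcases eq_or_ne (i, j) (r, c) with h | h
    · have := hd' i j hij
      rw [h, hT'rc, Finset.mem_insert] at this
      rw [h]
      exact hX (this.resolve_left hb)
    · rw [← hoff _ h]; exact hd' i j hij

end SetValued

section ReadingOrder

/-- `p` is read before `q` in the reverse row reading order. -/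
def ReadBefore (p q : ℕ × ℕ) : Prop := p.1 < q.1 ∨ (p.1 = q.1 ∧ q.2 < p.2)

/-- The order in which `revrowEntries` lists the letters: box by box, decreasingly in a box. -/
def EntryReadBefore (e e' : (ℕ × ℕ) × ℕ) : Prop :=
  ReadBefore e.1 e'.1 ∨ (e.1 = e'.1 ∧ e'.2 < e.2)

lemma ReadBefore.asymm {p q : ℕ × ℕ} (h : ReadBefore p q) : ¬ ReadBefore q p := by
  unfold ReadBefore at *; omega

lemma ReadBefore.ne {p q : ℕ × ℕ} (h : ReadBefore p q) : p ≠ q := by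
  rintro rfl; exact h.asymm h

lemma EntryReadBefore.asymm {e e' : (ℕ × ℕ) × ℕ} (h : EntryReadBefore e e') :
    ¬ EntryReadBefore e' e := by
  rintro (h' | ⟨h1', h2'⟩) <;> rcases h with h | ⟨h1, h2⟩
  · exact h.asymm h'
  · exact h'.ne h1.symm
  · exact h.ne h1'.symm
  · omega

instance : Std.Irrefl ReadBefore := ⟨fun _ h => h.ne rfl⟩

instance : Std.Irrefl EntryReadBefore := ⟨fun _ h => h.asymm h⟩

variable {lam : List ℕ} {T : ℕ × ℕ → Finset ℕ}

lemma mem_revrowBoxes {p : ℕ × ℕ} : p ∈ revrowBoxes lam ↔ InSD lam p.1 p.2 := by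
  obtain ⟨x, y⟩ := p
  simp only [revrowBoxes, InSD, List.mem_flatMap, List.mem_map, List.mem_reverse,
    List.mem_range, Prod.mk.injEq]
  constructor
  · rintro ⟨r, hr, j, hj, rfl, rfl⟩
    simp only [Nat.add_sub_cancel]; omega
  · rintro ⟨h1, h2, h3, h4⟩
    exact ⟨x - 1, by omega, y - x, by omega, by omega, by omega⟩

lemma revrowBoxes_pairwise : (revrowBoxes lam).Pairwise ReadBefore := by
  refine List.pairwise_flatMap.mpr ⟨fun r _ => ?_, List.pairwise_lt_range.imp ?_⟩
  · rw [List.pairwise_map, List.pairwise_reverse]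
    exact List.pairwise_lt_range.imp fun h => Or.inr ⟨rfl, by simpa using h⟩
  · intro r r' hr x hx y hy
    simp only [List.mem_map] at hx hy
    obtain ⟨j, -, rfl⟩ := hx
    obtain ⟨j', -, rfl⟩ := hy
    exact Or.inl (by simpa using hr)

lemma mem_revrowEntries {e : (ℕ × ℕ) × ℕ} :
    e ∈ revrowEntries lam T ↔ e.1 ∈ revrowBoxes lam ∧ e.2 ∈ T e.1 := by
  simp only [revrowEntries, List.mem_flatMap, List.mem_map, List.mem_reverse, Finset.mem_sort]
  constructor
  · rintro ⟨b, hb, v, hv, rfl⟩; exact ⟨hb, hv⟩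
  · rintro ⟨hb, hv⟩; exact ⟨e.1, hb, e.2, hv, rfl⟩

lemma revrowEntries_pairwise : (revrowEntries lam T).Pairwise EntryReadBefore := by
  refine List.pairwise_flatMap.mpr ⟨fun b _ => ?_, revrowBoxes_pairwise.imp ?_⟩
  · rw [List.pairwise_map, List.pairwise_reverse]
    exact (Finset.sortedLT_sort (T b)).pairwise.imp fun h => Or.inr ⟨rfl, h⟩
  · intro b b' hbb' x hx y hy
    simp only [List.mem_map] at hx hy
    obtain ⟨v, -, rfl⟩ := hx
    obtain ⟨v', -, rfl⟩ := hy
    exact Or.inl hbb'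

lemma List.mem_left_iff_of_pairwise {α : Type*} {R : α → α → Prop}
    (hR : ∀ x y, R x y → ¬ R y x) {l₁ l₂ : List α} {a e : α}
    (hl : (l₁ ++ a :: l₂).Pairwise R) : e ∈ l₁ ↔ e ∈ l₁ ++ a :: l₂ ∧ R e a := by
  rw [List.pairwise_append, List.pairwise_cons] at hl
  refine ⟨fun he => ⟨List.mem_append_left _ he, hl.2.2 e he a List.mem_cons_self⟩, ?_⟩
  rintro ⟨he, hea⟩
  rcases List.mem_append.mp he with he | he
  · exact he
  rcases List.mem_cons.mp he with rfl | he
  · exact absurd hea (fun h => hR e e h h)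
  · exact absurd (hl.2.1.1 e he) (hR e a hea)

lemma List.Nodup.notMem_of_eq_append_cons {α : Type*} {l₁ l₂ : List α} {a : α}
    (h : (l₁ ++ a :: l₂).Nodup) : a ∉ l₁ ∧ a ∉ l₂ := by
  have := (List.nodup_middle.mp h |> List.nodup_cons.mp).1
  exact ⟨fun hm => this (List.mem_append_left _ hm), fun hm => this (List.mem_append_right _ hm)⟩

lemma mem_of_revrowEntries_eq_append_cons {E₁ E₂ : List ((ℕ × ℕ) × ℕ)} {x : ℕ × ℕ} {v : ℕ}
    (hE : revrowEntries lam T = E₁ ++ (x, v) :: E₂) {e : (ℕ × ℕ) × ℕ} :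
    e ∈ E₁ ↔ e.1 ∈ revrowBoxes lam ∧ e.2 ∈ T e.1 ∧ EntryReadBefore e (x, v) := by
  have hpw := hE ▸ revrowEntries_pairwise (lam := lam) (T := T)
  rw [List.mem_left_iff_of_pairwise (fun _ _ h => h.asymm) hpw, ← hE, mem_revrowEntries, and_assoc]

end ReadingOrder

section SwapRelation

lemma Finset.insert_erase_insert_erase_of_mem_of_notMem {X : Finset ℕ} {a b : ℕ} (ha : a ∈ X)
    (hb : b ∉ X) : insert a ((insert b (X.erase a)).erase b) = X := by
  rw [Finset.erase_insert fun h => hb (Finset.mem_of_mem_erase h), Finset.insert_erase ha]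

/-- `T'` arises from `T` by turning into a `1` the `2` in box `xy`, where this `2` is the first
letter at most `2` of the reading word of `T` and `xy` contains no `1`. -/
structure SwapRel (lam : List ℕ) (xy : ℕ × ℕ) (T T' : ℕ × ℕ → Finset ℕ) : Prop where
  mem : xy ∈ revrowBoxes lam
  two_lt_of_readBefore : ∀ b ∈ revrowBoxes lam, ReadBefore b xy → ∀ v ∈ T b, 2 < v
  zero_notMem : ∀ b ∈ revrowBoxes lam, 0 ∉ T b
  two_mem : 2 ∈ T xy
  one_notMem : 1 ∉ T xy
  eq_update : T' = Function.update T xy (insert 1 ((T xy).erase 2))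

variable {lam : List ℕ} {xy : ℕ × ℕ} {T T' : ℕ × ℕ → Finset ℕ}

namespace SwapRel

lemma apply_self (h : SwapRel lam xy T T') : T' xy = insert 1 ((T xy).erase 2) := by
  rw [h.eq_update, Function.update_self]

lemma apply_of_ne (h : SwapRel lam xy T T') {b : ℕ × ℕ} (hb : b ≠ xy) : T' b = T b := by
  rw [h.eq_update, Function.update_of_ne hb]

lemma mem_iff (h : SwapRel lam xy T T') {v : ℕ} (hv1 : v ≠ 1) (hv2 : v ≠ 2) (b : ℕ × ℕ) :
    v ∈ T' b ↔ v ∈ T b := by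
  rcases eq_or_ne b xy with rfl | hb
  · simp [h.apply_self, hv1, hv2]
  · rw [h.apply_of_ne hb]

lemma eq_update_symm (h : SwapRel lam xy T T') :
    T = Function.update T' xy (insert 2 ((T' xy).erase 1)) := by
  ext b : 1
  rcases eq_or_ne b xy with rfl | hb
  · rw [Function.update_self, h.apply_self,
      Finset.insert_erase_insert_erase_of_mem_of_notMem h.two_mem h.one_notMem]
  · rw [Function.update_of_ne hb, h.apply_of_ne hb]

lemma isSetDecompTab_iff (h : SwapRel lam xy T T') :
    IsSetDecompTab lam T ↔ IsSetDecompTab lam T' := by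
  obtain ⟨r, c⟩ := xy
  have hin : InSD lam r c := mem_revrowBoxes.mp h.mem
  have hr : 1 ≤ r := hin.1
  have hright : ∀ c', c < c' → InSD lam r c' → ∀ v ∈ T (r, c'), 3 ≤ v := fun c' hcc' hc' =>
    h.two_lt_of_readBefore _ (mem_revrowBoxes.mpr hc') (Or.inr ⟨rfl, hcc'⟩)
  have habove : ∀ c', InSD lam (r - 1) c' → ∀ v ∈ T (r - 1, c'), 3 ≤ v := fun c' hc' =>
    h.two_lt_of_readBefore _ (mem_revrowBoxes.mpr hc') (Or.inl (by simp only; omega))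
  have hoff : ∀ z, z ≠ (r, c) → T' z = T z := fun z hz => h.apply_of_ne hz
  have hTrc : T (r, c) = insert 2 ((T (r, c)).erase 2) := (Finset.insert_erase h.two_mem).symm
  constructor
  · intro hT
    exact hT.replace_small hin (by norm_num) le_rfl le_rfl (by norm_num) hTrc h.apply_self hoff
      hright habove
  · intro hT'
    refine hT'.replace_small hin le_rfl (by norm_num) (by norm_num) le_rfl h.apply_self hTrc
      (fun z hz => (hoff z hz).symm) ?_ ?_
    · intro c' hcc' hc'
      rw [hoff _ (by simp only [ne_eq, Prod.mk.injEq]; omega)]; exact hright c' hcc' hc'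
    · intro c' hc'
      rw [hoff _ (by simp only [ne_eq, Prod.mk.injEq]; omega)]; exact habove c' hc'

lemma revrowEntries_eq_map (h : SwapRel lam xy T T') :
    revrowEntries lam T' =
      (revrowEntries lam T).map fun e => if e = (xy, 2) then (xy, 1) else e := by
  unfold revrowEntries
  rw [List.map_flatMap]
  refine List.flatMap_congr fun b _ => ?_
  rcases eq_or_ne b xy with rfl | hb
  · obtain ⟨S, hSdef⟩ : ∃ S, S = (T b).erase 2 := ⟨_, rfl⟩
    have hS : ∀ s ∈ S, 2 < s := fun s hs => by
      rw [hSdef, Finset.mem_erase] at hs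
      have : s ≠ 1 := fun e => h.one_notMem (e ▸ hs.2)
      have : s ≠ 0 := fun e => h.zero_notMem b h.mem (e ▸ hs.2)
      omega
    have hsort : ∀ a, a ≤ 2 → (insert a S).sort (· ≤ ·) = a :: S.sort (· ≤ ·) := fun a ha =>
      Finset.sort_insert _ (fun s hs => by have := hS s hs; omega)
        (fun has => by have := hS a has; omega)
    have hT' : T' b = insert 1 S := hSdef ▸ h.apply_self
    have hT : T b = insert 2 S := hSdef ▸ (Finset.insert_erase h.two_mem).symm
    rw [hT', hT, hsort 1 (by norm_num), hsort 2 le_rfl]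
    simp only [List.reverse_cons, List.map_append, List.map_map, List.map_cons, List.map_nil]
    simp only [Function.comp_def, ite_true]
    congr 1
    refine List.map_congr_left fun s hs => ?_
    have := hS s (by simpa using hs)
    simp only [Prod.mk.injEq, true_and]
    rw [if_neg (by omega)]
  · rw [h.apply_of_ne hb]
    conv_lhs => rw [← List.map_id (List.map _ _)]
    refine List.map_congr_left fun e he => ?_
    simp only [List.mem_map] at he
    obtain ⟨v, -, rfl⟩ := he
    simp [hb]

lemma exists_revrowEntries_eq (h : SwapRel lam xy T T') :
    ∃ E₁ E₂, revrowEntries lam T = E₁ ++ (xy, 2) :: E₂ ∧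
      revrowEntries lam T' = E₁ ++ (xy, 1) :: E₂ ∧ ∀ e ∈ E₁, 2 < e.2 := by
  obtain ⟨E₁, E₂, hE⟩ :=
    List.append_of_mem (mem_revrowEntries (e := (xy, 2)) |>.mpr ⟨h.mem, h.two_mem⟩)
  obtain ⟨h₁, h₂⟩ := (hE ▸ revrowEntries_pairwise.nodup : (E₁ ++ (xy, 2) :: E₂).Nodup)
    |>.notMem_of_eq_append_cons
  have hbefore : ∀ e ∈ E₁, 2 < e.2 := by
    intro e he
    obtain ⟨hb, hv, hbefore⟩ := (mem_of_revrowEntries_eq_append_cons hE).mp he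
    rcases hbefore with hbefore | ⟨-, hlt⟩
    · exact h.two_lt_of_readBefore _ hb hbefore _ hv
    · exact hlt
  refine ⟨E₁, E₂, hE, ?_, hbefore⟩
  rw [h.revrowEntries_eq_map, hE, List.map_append, List.map_cons, if_pos rfl]
  congr 1
  · conv_rhs => rw [← List.map_id E₁]
    exact List.map_congr_left fun e he => if_neg fun (he' : e = (xy, 2)) => h₁ (he' ▸ he)
  · congr 1
    conv_rhs => rw [← List.map_id E₂]
    exact List.map_congr_left fun e he => if_neg fun (he' : e = (xy, 2)) => h₂ (he' ▸ he)

end SwapRel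

end SwapRelation

section QueerOperators

lemma List.eq_take_append_getD_cons_drop {α : Type*} {l : List α} {p : ℕ} (d : α)
    (hp : p < l.length) : l = l.take p ++ l.getD p d :: l.drop (p + 1) := by
  rw [List.getD_eq_getElem _ _ hp, List.getElem_cons_drop, List.take_append_drop]

lemma exists_find_eq_of_eq_append_cons {w W₁ W₂ : List ℕ} {a b : ℕ} (hw : w = W₁ ++ a :: W₂)
    (hW₁ : ∀ x ∈ W₁, x ≠ a ∧ x ≠ b) :
    ∃ h : ∃ p, p < w.length ∧ w.getD p 0 = a ∧ ∀ q < p, w.getD q 0 ≠ b,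
      Nat.find h = W₁.length := by
  have hbefore : ∀ q < W₁.length, w.getD q 0 ≠ a ∧ w.getD q 0 ≠ b := fun q hq => by
    rw [hw, getD_append_cons_of_lt hq]; exact hW₁ _ (getD_mem hq)
  have hP : W₁.length < w.length ∧ w.getD W₁.length 0 = a ∧ ∀ q < W₁.length, w.getD q 0 ≠ b :=
    ⟨by simp [hw], by rw [hw, getD_append_cons_length], fun q hq => (hbefore q hq).2⟩
  exact ⟨⟨_, hP⟩, (Nat.find_eq_iff _).mpr ⟨hP, fun q hq hPq => (hbefore q hq).1 hPq.2.1⟩⟩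

variable {lam : List ℕ} {T T' U : ℕ × ℕ → Finset ℕ} {xy : ℕ × ℕ}

lemma revrowEntries_eq_append_cons_find {a b : ℕ}
    (h : ∃ p, p < (revrowWord lam T).length ∧ (revrowWord lam T).getD p 0 = a ∧
      ∀ q < p, (revrowWord lam T).getD q 0 ≠ b) :
    revrowEntries lam T = (revrowEntries lam T).take (Nat.find h) ++
        (((revrowEntries lam T).getD (Nat.find h) ((0, 0), 0)).1, a) ::
          (revrowEntries lam T).drop (Nat.find h + 1) ∧
      ∀ e ∈ (revrowEntries lam T).take (Nat.find h), e.2 ≠ a ∧ e.2 ≠ b := by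
  have hgetD : ∀ q, (revrowWord lam T).getD q 0 = ((revrowEntries lam T).getD q ((0, 0), 0)).2 :=
    fun q => List.getD_map (revrowEntries lam T) ((0, 0), 0) Prod.snd
  obtain ⟨hlt, ha, hb⟩ := Nat.find_spec h
  have hlt' : Nat.find h < (revrowEntries lam T).length := by simpa [revrowWord] using hlt
  constructor
  · have h2 : ((revrowEntries lam T).getD (Nat.find h) ((0, 0), 0)).2 = a := by
      rw [← hgetD]; exact ha
    conv_lhs => rw [List.eq_take_append_getD_cons_drop ((0, 0), 0) hlt']
    exact congrArg _ (congrArg (· :: _) (Prod.ext rfl h2))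
  · intro e he
    obtain ⟨q, hq, rfl⟩ := List.mem_take_iff_getElem.mp he
    have hq' : q < Nat.find h := lt_of_lt_of_le hq (min_le_left _ _)
    have hqe : (revrowWord lam T).getD q 0 = (revrowEntries lam T)[q].2 := by
      rw [hgetD, List.getD_eq_getElem]
    rw [← hqe]
    refine ⟨fun hqa => Nat.find_min h hq' ⟨?_, hqa, fun q' hq'' => hb q' (by omega)⟩, hb q hq'⟩
    simpa [revrowWord] using hq.trans_le (min_le_right _ _)

lemma SwapRel.eBarCrystal_eq (h : SwapRel lam xy T T') : eBarCrystal lam T = some T' := by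
  obtain ⟨E₁, E₂, hE, -, hE₁⟩ := h.exists_revrowEntries_eq
  have hw : revrowWord lam T = E₁.map Prod.snd ++ 2 :: E₂.map Prod.snd := by
    simp [revrowWord, hE]
  obtain ⟨hex, hfind⟩ := exists_find_eq_of_eq_append_cons hw (b := 1) (by
    simp only [List.mem_map]
    rintro _ ⟨e, he, rfl⟩
    have := hE₁ e he
    omega)
  have hbox : ((revrowEntries lam T).getD (Nat.find hex) ((0, 0), 0)).1 = xy := by
    rw [hfind, hE, List.length_map, getD_append_cons_length]
  unfold eBarCrystal
  rw [dif_pos hex]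
  simp only [hbox, if_neg h.one_notMem, h.eq_update]

lemma SwapRel.fBarCrystal_eq (h : SwapRel lam xy T T') : fBarCrystal lam T' = some T := by
  obtain ⟨E₁, E₂, -, hE, hE₁⟩ := h.exists_revrowEntries_eq
  have hw : revrowWord lam T' = E₁.map Prod.snd ++ 1 :: E₂.map Prod.snd := by
    simp [revrowWord, hE]
  obtain ⟨hex, hfind⟩ := exists_find_eq_of_eq_append_cons hw (b := 2) (by
    simp only [List.mem_map]
    rintro _ ⟨e, he, rfl⟩
    have := hE₁ e he
    omega)
  have hbox : ((revrowEntries lam T').getD (Nat.find hex) ((0, 0), 0)).1 = xy := by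
    rw [hfind, hE, List.length_map, getD_append_cons_length]
  unfold fBarCrystal
  rw [dif_pos hex]
  simp only [hbox, ← h.eq_update_symm]

lemma exists_swapRel_of_eBarCrystal_eq_some (h0 : ∀ b ∈ revrowBoxes lam, 0 ∉ T b)
    (h : eBarCrystal lam T = some U) : ∃ xy, SwapRel lam xy T U := by
  unfold eBarCrystal at h
  dsimp only at h
  split_ifs at h with hex h1
  obtain ⟨hE, hE₁⟩ := revrowEntries_eq_append_cons_find hex
  set x := ((revrowEntries lam T).getD (Nat.find hex) ((0, 0), 0)).1
  obtain ⟨hx, h2x⟩ := mem_revrowEntries.mp (hE ▸ List.mem_append_right _ List.mem_cons_self)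
  refine ⟨x, hx, fun b hb hbx v hv => ?_, h0, h2x, h1, (Option.some.inj h).symm⟩
  have hbv := (mem_of_revrowEntries_eq_append_cons hE (e := (b, v))).mpr ⟨hb, hv, Or.inl hbx⟩
  have := hE₁ _ hbv
  have : v ≠ 0 := fun hv0 => h0 b hb (hv0 ▸ hv)
  omega

lemma exists_swapRel_of_fBarCrystal_eq_some (h0 : ∀ b ∈ revrowBoxes lam, 0 ∉ U b)
    (h : fBarCrystal lam U = some T) : ∃ xy, SwapRel lam xy T U := by
  unfold fBarCrystal at h
  dsimp only at h
  split_ifs at h with hex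
  obtain ⟨hE, hE₁⟩ := revrowEntries_eq_append_cons_find hex
  set x := ((revrowEntries lam U).getD (Nat.find hex) ((0, 0), 0)).1
  obtain ⟨hx, h1x⟩ := mem_revrowEntries.mp (hE ▸ List.mem_append_right _ List.mem_cons_self)
  have hbefore : ∀ b ∈ revrowBoxes lam, ∀ v ∈ U b, EntryReadBefore (b, v) (x, 1) → 2 < v :=
    fun b hb v hv hbv => by
      have hmem := (mem_of_revrowEntries_eq_append_cons hE (e := (b, v))).mpr ⟨hb, hv, hbv⟩
      have := hE₁ _ hmem
      have : v ≠ 0 := fun hv0 => h0 b hb (hv0 ▸ hv)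
      omega
  have h2x : 2 ∉ U x := fun h2 => by
    have := hbefore x hx 2 h2 (Or.inr ⟨rfl, by norm_num⟩); omega
  have hT : T = Function.update U x (insert 2 ((U x).erase 1)) := (Option.some.inj h).symm
  have hTx : T x = insert 2 ((U x).erase 1) := by rw [hT, Function.update_self]
  have hTb : ∀ b, b ≠ x → T b = U b := fun b hb => by rw [hT, Function.update_of_ne hb]
  refine ⟨x, hx, fun b hb hbx v hv => ?_, fun b hb h0b => ?_, by simp [hTx], by simp [hTx], ?_⟩
  · rw [hTb b hbx.ne] at hv
    exact hbefore b hb v hv (Or.inl hbx)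
  · rcases eq_or_ne b x with hbx | hbx
    · rw [hbx, hTx] at h0b
      exact h0 x hx (by simpa using h0b)
    · exact h0 b hb (hTb b hbx ▸ h0b)
  · ext b : 1
    rcases eq_or_ne b x with hbx | hbx
    · rw [hbx, Function.update_self, hTx,
        Finset.insert_erase_insert_erase_of_mem_of_notMem h1x h2x]
    · rw [Function.update_of_ne hbx, hTb b hbx]

lemma eBarCrystal_eq_some_iff (h0 : ∀ b ∈ revrowBoxes lam, 0 ∉ T b) :
    eBarCrystal lam T = some U ↔ ∃ xy, SwapRel lam xy T U :=
  ⟨exists_swapRel_of_eBarCrystal_eq_some h0, fun ⟨_, h⟩ => h.eBarCrystal_eq⟩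

lemma fBarCrystal_eq_some_iff (h0 : ∀ b ∈ revrowBoxes lam, 0 ∉ U b) :
    fBarCrystal lam U = some T ↔ ∃ xy, SwapRel lam xy T U :=
  ⟨exists_swapRel_of_fBarCrystal_eq_some h0, fun ⟨_, h⟩ => h.fBarCrystal_eq⟩

end QueerOperators

section SwapRelInvariants

variable {lam : List ℕ} {xy : ℕ × ℕ} {T T' : ℕ × ℕ → Finset ℕ} {n : ℕ}

lemma IsSetDecompTabN.zero_notMem (hT : IsSetDecompTabN n lam T) :
    ∀ b ∈ revrowBoxes lam, 0 ∉ T b :=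
  fun b hb => (hT.1.1 b.1 b.2 (mem_revrowBoxes.mp hb)).2

lemma SwapRel.isSetDecompTabN_iff (h : SwapRel lam xy T T') (hn : 2 ≤ n) :
    IsSetDecompTabN n lam T ↔ IsSetDecompTabN n lam T' := by
  have hbound : ∀ b v, (v ∈ T b → v ≤ n) ↔ (v ∈ T' b → v ≤ n) := fun b v => by
    rcases (show v ≤ 2 ∨ (v ≠ 1 ∧ v ≠ 2) by omega) with hv | ⟨hv1, hv2⟩
    · exact ⟨fun _ _ => hv.trans hn, fun _ _ => hv.trans hn⟩
    · rw [h.mem_iff hv1 hv2]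
  simp only [IsSetDecompTabN, h.isSetDecompTab_iff, hbound]

lemma wtSet_sub_of_eq_off (hxy : xy ∈ revrowBoxes lam)
    (hoff : ∀ b, b ≠ xy → T' b = T b) (k : ℕ) :
    (wtSet lam T' k : ℤ) - wtSet lam T k =
      (if k ∈ T' xy then 1 else 0) - (if k ∈ T xy then 1 else 0) := by
  obtain ⟨P, Q, hPQ⟩ := List.append_of_mem hxy
  obtain ⟨hxP, hxQ⟩ := (hPQ ▸ revrowBoxes_pairwise.nodup : (P ++ xy :: Q).Nodup)
    |>.notMem_of_eq_append_cons
  have hfilter : ∀ L : List (ℕ × ℕ), xy ∉ L →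
      L.filter (fun b => decide (k ∈ T' b)) = L.filter (fun b => decide (k ∈ T b)) :=
    fun L hL => List.filter_congr fun b hb => by rw [hoff b (fun e => hL (e ▸ hb))]
  unfold wtSet
  rw [hPQ, List.filter_append, List.filter_append, List.filter_cons, List.filter_cons,
    hfilter P hxP, hfilter Q hxQ]
  split_ifs <;> simp_all

lemma SwapRel.wtSet_sub (h : SwapRel lam xy T T') (k : ℕ) :
    (wtSet lam T' k : ℤ) - wtSet lam T k =
      (if k = 1 then 1 else 0) - (if k = 2 then 1 else 0) := by
  rw [wtSet_sub_of_eq_off h.mem (fun b hb => h.apply_of_ne hb), h.apply_self]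
  have := h.two_mem
  have := h.one_notMem
  by_cases hk1 : k = 1
  · subst hk1; simp_all
  by_cases hk2 : k = 2
  · subst hk2; simp_all
  by_cases hk : k ∈ T xy <;> simp_all

end SwapRelInvariants

section Unpaired

variable {i : ℕ} {f : ℕ → ℕ}

lemma closeCount_map (hf : ∀ x, f x = i ↔ x = i) (hf' : ∀ x, f x = i + 1 ↔ x = i + 1)
    (l : List ℕ) : closeCount i (l.map f) = closeCount i l := by
  unfold closeCount
  rw [List.foldr_map]
  congr 1
  funext a acc
  simp only [hf, hf']

lemma openCount_map (hf : ∀ x, f x = i ↔ x = i) (hf' : ∀ x, f x = i + 1 ↔ x = i + 1)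
    (l : List ℕ) : openCount i (l.map f) = openCount i l := by
  unfold openCount
  rw [List.foldl_map]
  congr 1
  funext acc a
  simp only [hf, hf']

lemma getD_map_eq_iff {l : List ℕ} {p c : ℕ} (hp : p < l.length) (hf : ∀ x, f x = c ↔ x = c) :
    (l.map f).getD p 0 = c ↔ l.getD p 0 = c := by
  rw [List.getD_eq_getElem _ _ (by simpa using hp), List.getD_eq_getElem _ _ hp,
    List.getElem_map, hf]

lemma unpairedHigh_map (hf : ∀ x, f x = i ↔ x = i) (hf' : ∀ x, f x = i + 1 ↔ x = i + 1)
    (w : List ℕ) : UnpairedHigh i (w.map f) = UnpairedHigh i w := by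
  ext p
  simp only [UnpairedHigh, List.length_map, ← List.map_drop, closeCount_map hf hf']
  exact and_congr_right fun hp => and_congr_left' (getD_map_eq_iff hp hf')

lemma unpairedLow_map (hf : ∀ x, f x = i ↔ x = i) (hf' : ∀ x, f x = i + 1 ↔ x = i + 1)
    (w : List ℕ) : UnpairedLow i (w.map f) = UnpairedLow i w := by
  ext p
  simp only [UnpairedLow, List.length_map, ← List.map_take, openCount_map hf hf']
  exact and_congr_right fun hp => and_congr_left' (getD_map_eq_iff hp hf)

end Unpaired

section LargeLetters

def SameSmallLetters (T V : ℕ × ℕ → Finset ℕ) : Prop := ∀ b, ∀ v ≤ 2, v ∈ V b ↔ v ∈ T b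

def IsLargeEdit (g : Finset ℕ → Finset ℕ) : Prop :=
  ∀ X, (∀ v ≤ 2, v ∈ g X ↔ v ∈ X) ∧ g (insert 1 (X.erase 2)) = insert 1 ((g X).erase 2)

lemma isLargeEdit_insert {a : ℕ} (ha : 3 ≤ a) : IsLargeEdit (insert a) := fun X =>
  ⟨fun v hv => by rw [Finset.mem_insert, or_iff_right (by omega)], by
    ext v; by_cases hX : v ∈ X <;> simp [hX] <;> omega⟩

lemma isLargeEdit_erase {a : ℕ} (ha : 3 ≤ a) : IsLargeEdit (·.erase a) := fun X =>
  ⟨fun v hv => by rw [Finset.mem_erase, and_iff_right (by omega)], by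
    ext v; by_cases hX : v ∈ X <;> simp [hX] <;> omega⟩

lemma IsLargeEdit.comp {g h : Finset ℕ → Finset ℕ} (hg : IsLargeEdit g) (hh : IsLargeEdit h) :
    IsLargeEdit (g ∘ h) := fun X =>
  ⟨fun v hv => ((hg _).1 v hv).trans ((hh X).1 v hv), by
    simp only [Function.comp, (hh X).2, (hg _).2]⟩

lemma SameSmallLetters.rfl {T : ℕ × ℕ → Finset ℕ} : SameSmallLetters T T :=
  fun _ _ _ => Iff.rfl

lemma SameSmallLetters.update {T W : ℕ × ℕ → Finset ℕ} {g : Finset ℕ → Finset ℕ}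
    (hTW : SameSmallLetters T W) (hg : IsLargeEdit g) (b : ℕ × ℕ) :
    SameSmallLetters T (Function.update W b (g (T b))) := by
  intro z v hv
  rcases eq_or_ne z b with rfl | hz
  · rw [Function.update_self, (hg _).1 v hv]
  · rw [Function.update_of_ne hz]; exact hTW z v hv

variable {lam : List ℕ} {xy : ℕ × ℕ} {T T' V V' W W' : ℕ × ℕ → Finset ℕ}

lemma SwapRel.transport (h : SwapRel lam xy T T') (hV : SameSmallLetters T V)
    (hV' : V' = Function.update V xy (insert 1 ((V xy).erase 2))) : SwapRel lam xy V V' := by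
  have hsmall : ∀ b, ∀ v ≤ 2, v ∈ V b → v ∈ T b := fun b v hv => (hV b v hv).mp
  refine ⟨h.mem, fun b hb hbxy v hv => ?_, fun b hb h0 => h.zero_notMem b hb (hsmall b 0
    (by norm_num) h0), (hV xy 2 le_rfl).mpr h.two_mem, fun h1 => h.one_notMem (hsmall xy 1
    (by norm_num) h1), hV'⟩
  by_contra hv2
  exact hv2 (h.two_lt_of_readBefore b hb hbxy v (hsmall b v (by omega) hv))

lemma SwapRel.update (hT : SwapRel lam xy T T') (hW : SwapRel lam xy W W')
    (hTW : SameSmallLetters T W) {g : Finset ℕ → Finset ℕ} (hg : IsLargeEdit g) (b : ℕ × ℕ) :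
    SwapRel lam xy (Function.update W b (g (T b))) (Function.update W' b (g (T' b))) := by
  refine hT.transport (hTW.update hg b) ?_
  ext1 z
  rcases eq_or_ne z b with rfl | hzb
  · rcases eq_or_ne z xy with rfl | hzxy
    · simp only [Function.update_self, hT.apply_self, (hg _).2]
    · simp only [Function.update_self, Function.update_of_ne hzxy, hT.apply_of_ne hzxy]
  · rw [Function.update_of_ne hzb, hW.eq_update]
    rcases eq_or_ne z xy with rfl | hzxy
    · simp only [Function.update_self, Function.update_of_ne hzb]
    · simp only [Function.update_of_ne hzxy, Function.update_of_ne hzb]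

lemma SameSmallLetters.symm (h : SameSmallLetters T V) : SameSmallLetters V T :=
  fun b v hv => (h b v hv).symm

lemma SameSmallLetters.zero_notMem (h : SameSmallLetters T V)
    (h0 : ∀ b ∈ revrowBoxes lam, 0 ∉ T b) :
    ∀ b ∈ revrowBoxes lam, 0 ∉ V b :=
  fun b hb h0b => h0 b hb ((h b 0 (by norm_num)).mp h0b)

lemma SwapRel.transport_right (h : SwapRel lam xy T T') (hV : SameSmallLetters T' V) :
    SwapRel lam xy (Function.update V xy (insert 2 ((V xy).erase 1))) V := by
  have hVxy : ∀ v ≤ 2, v ∈ V xy ↔ v ∈ T' xy := hV xy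
  simp only [h.apply_self, Finset.mem_insert, Finset.mem_erase] at hVxy
  have h1 : 1 ∈ V xy := (hVxy 1 (by norm_num)).mpr (by simp)
  have h2 : 2 ∉ V xy := fun h2 => by simpa using (hVxy 2 le_rfl).mp h2
  refine h.transport (fun b v hv => ?_) ?_
  · rcases eq_or_ne b xy with rfl | hb
    · rw [Function.update_self]
      have := hVxy v hv
      have := h.two_mem
      have := h.one_notMem
      interval_cases v <;> simp_all
    · rw [Function.update_of_ne hb, hV b v hv, h.apply_of_ne hb]
  · ext1 b
    rcases eq_or_ne b xy with rfl | hb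
    · rw [Function.update_self, Function.update_self,
        Finset.insert_erase_insert_erase_of_mem_of_notMem h1 h2]
    · rw [Function.update_of_ne hb, Function.update_of_ne hb]

lemma SwapRel.merge_map_revrowWord (h : SwapRel lam xy T T') :
    (revrowWord lam T').map (fun x => if x = 1 then 2 else x) =
      (revrowWord lam T).map (fun x => if x = 1 then 2 else x) := by
  obtain ⟨E₁, E₂, hE, hE', -⟩ := h.exists_revrowEntries_eq
  simp [revrowWord, hE, hE']

lemma SwapRel.unpairedHigh_eq {i : ℕ} (h : SwapRel lam xy T T') (hi : 3 ≤ i) :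
    UnpairedHigh i (revrowWord lam T') = UnpairedHigh i (revrowWord lam T) := by
  have hf : ∀ c, 3 ≤ c → ∀ x, (if x = 1 then 2 else x) = c ↔ x = c := fun c hc x => by
    split_ifs <;> omega
  rw [← unpairedHigh_map (hf i hi) (hf (i + 1) (by omega)), h.merge_map_revrowWord,
    unpairedHigh_map (hf i hi) (hf (i + 1) (by omega))]

lemma SwapRel.unpairedLow_eq {i : ℕ} (h : SwapRel lam xy T T') (hi : 3 ≤ i) :
    UnpairedLow i (revrowWord lam T') = UnpairedLow i (revrowWord lam T) := by
  have hf : ∀ c, 3 ≤ c → ∀ x, (if x = 1 then 2 else x) = c ↔ x = c := fun c hc x => by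
    split_ifs <;> omega
  rw [← unpairedLow_map (hf i hi) (hf (i + 1) (by omega)), h.merge_map_revrowWord,
    unpairedLow_map (hf i hi) (hf (i + 1) (by omega))]

lemma SwapRel.revrowWord_length (h : SwapRel lam xy T T') :
    (revrowWord lam T').length = (revrowWord lam T).length := by
  simpa using congrArg List.length h.merge_map_revrowWord

lemma SwapRel.revrowEntries_getD_fst (h : SwapRel lam xy T T') (q : ℕ) :
    ((revrowEntries lam T').getD q ((0, 0), 0)).1 =
      ((revrowEntries lam T).getD q ((0, 0), 0)).1 := by
  rw [h.revrowEntries_eq_map]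
  conv_lhs =>
    rw [show ((0, 0), 0) = (fun e => if e = (xy, 2) then (xy, 1) else e) ((0, 0), 0) by simp]
  rw [List.getD_map]
  split_ifs with he
  · rw [he]
  · rfl

end LargeLetters

section GlOperators

variable {lam : List ℕ} {xy : ℕ × ℕ} {T T' V : ℕ × ℕ → Finset ℕ} {i : ℕ}

lemma SwapRel.rel_eCrystal (h : SwapRel lam xy T T') (hi : 3 ≤ i) :
    Option.Rel (SwapRel lam xy) (eCrystal lam i T) (eCrystal lam i T') := by
  have hins := isLargeEdit_insert hi
  have hera := isLargeEdit_erase (show 3 ≤ i + 1 by omega)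
  have hinplace : ∀ b, IsSetDecompTab lam (Function.update T' b (insert i ((T' b).erase (i + 1))))
      ↔ IsSetDecompTab lam (Function.update T b (insert i ((T b).erase (i + 1)))) := fun b =>
    (h.update h .rfl (hins.comp hera) b).isSetDecompTab_iff.symm
  -- once every condition on `T'` is rewritten into the same condition on `T`, both sides
  -- take the same branch
  unfold eCrystal
  simp only [h.unpairedHigh_eq hi, h.revrowEntries_getD_fst, hinplace,
    h.mem_iff (show i ≠ 1 by omega) (show i ≠ 2 by omega),
    h.mem_iff (show i + 1 ≠ 1 by omega) (show i + 1 ≠ 2 by omega)]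
  split_ifs
  · exact .some (h.update h .rfl (hins.comp hera) _)
  · exact .some (h.update (h.update h .rfl hera _) (SameSmallLetters.rfl.update hera _) hins _)
  · exact .none
  · exact .none

lemma SwapRel.rel_fCrystal (h : SwapRel lam xy T T') (hi : 3 ≤ i) :
    Option.Rel (SwapRel lam xy) (fCrystal lam i T) (fCrystal lam i T') := by
  have hins := isLargeEdit_insert (show 3 ≤ i + 1 by omega)
  have hera := isLargeEdit_erase hi
  have hinplace : ∀ b, IsSetDecompTab lam (Function.update T' b (insert (i + 1) ((T' b).erase i)))
      ↔ IsSetDecompTab lam (Function.update T b (insert (i + 1) ((T b).erase i))) := fun b =>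
    (h.update h .rfl (hins.comp hera) b).isSetDecompTab_iff.symm
  unfold fCrystal
  simp only [h.unpairedLow_eq hi, h.revrowWord_length, h.revrowEntries_getD_fst, hinplace,
    h.mem_iff (show i ≠ 1 by omega) (show i ≠ 2 by omega),
    h.mem_iff (show i + 1 ≠ 1 by omega) (show i + 1 ≠ 2 by omega)]
  split_ifs
  · exact .some (h.update h .rfl (hins.comp hera) _)
  · exact .some (h.update (h.update h .rfl hera _) (SameSmallLetters.rfl.update hera _) hins _)
  · exact .none
  · exact .none

lemma sameSmallLetters_of_eCrystal_eq_some (hi : 3 ≤ i) (h : eCrystal lam i T = some V) :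
    SameSmallLetters T V := by
  have hins := isLargeEdit_insert hi
  have hera := isLargeEdit_erase (show 3 ≤ i + 1 by omega)
  unfold eCrystal at h
  dsimp only at h
  split_ifs at h
  · obtain rfl := Option.some.inj h
    exact SameSmallLetters.rfl.update (hins.comp hera) _
  · obtain rfl := Option.some.inj h
    exact (SameSmallLetters.rfl.update hera _).update hins _

lemma sameSmallLetters_of_fCrystal_eq_some (hi : 3 ≤ i) (h : fCrystal lam i T = some V) :
    SameSmallLetters T V := by
  have hins := isLargeEdit_insert (show 3 ≤ i + 1 by omega)
  have hera := isLargeEdit_erase hi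
  unfold fCrystal at h
  dsimp only at h
  split_ifs at h
  · obtain rfl := Option.some.inj h
    exact SameSmallLetters.rfl.update (hins.comp hera) _
  · obtain rfl := Option.some.inj h
    exact (SameSmallLetters.rfl.update hera _).update hins _

end GlOperators

section Commutation

lemma Option.Rel.eq_none_iff {α β : Type*} {r : α → β → Prop} {a : Option α} {b : Option β}
    (h : Option.Rel r a b) : a = .none ↔ b = .none := by
  cases h <;> simp

lemma Option.Rel.iterOpt {α : Type*} {r : α → α → Prop} {g : α → Option α}
    (hg : ∀ a b, r a b → Option.Rel r (g a) (g b)) (k : ℕ) {a b : α} (hab : r a b) :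
    Option.Rel r (iterOpt g k a) (iterOpt g k b) := by
  induction k generalizing a b with
  | zero => exact .some hab
  | succ k ih =>
    have hgab := hg a b hab
    simp only [_root_.iterOpt]
    generalize g a = x at hgab ⊢
    generalize g b = y at hgab ⊢
    cases hgab with
    | none => exact .none
    | some h => exact ih h

lemma hasStringLen_iff_of_rel {α : Type*} {r : α → α → Prop} {g : α → Option α}
    (hg : ∀ a b, r a b → Option.Rel r (g a) (g b)) {a b : α} (hab : r a b) (m : ℕ) :
    HasStringLen g a m ↔ HasStringLen g b m :=
  and_congr (not_congr ((Option.Rel.iterOpt hg m hab).eq_none_iff))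
    (Option.Rel.iterOpt hg (m + 1) hab).eq_none_iff

variable {lam : List ℕ} {xy : ℕ × ℕ} {T T' V : ℕ × ℕ → Finset ℕ}

lemma SwapRel.hasStringLen_eCrystal_iff (h : SwapRel lam xy T T') {i : ℕ} (hi : 3 ≤ i) (m : ℕ) :
    HasStringLen (eCrystal lam i) T m ↔ HasStringLen (eCrystal lam i) T' m :=
  hasStringLen_iff_of_rel (fun _ _ h => h.rel_eCrystal hi) h m

lemma SwapRel.hasStringLen_fCrystal_iff (h : SwapRel lam xy T T') {i : ℕ} (hi : 3 ≤ i) (m : ℕ) :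
    HasStringLen (fCrystal lam i) T m ↔ HasStringLen (fCrystal lam i) T' m :=
  hasStringLen_iff_of_rel (fun _ _ h => h.rel_fCrystal hi) h m

lemma eBarCrystal_eq_none_of_sameSmallLetters (h0 : ∀ b ∈ revrowBoxes lam, 0 ∉ T b)
    (hTV : SameSmallLetters T V) (hT : eBarCrystal lam T = none) : eBarCrystal lam V = none := by
  by_contra hV
  obtain ⟨W, hW⟩ := Option.ne_none_iff_exists'.mp hV
  obtain ⟨xy, hxy⟩ := exists_swapRel_of_eBarCrystal_eq_some (hTV.zero_notMem h0) hW
  rw [(hxy.transport hTV.symm rfl).eBarCrystal_eq] at hT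
  exact Option.some_ne_none _ hT

lemma fBarCrystal_eq_none_of_sameSmallLetters (h0 : ∀ b ∈ revrowBoxes lam, 0 ∉ T b)
    (hTV : SameSmallLetters T V) (hT : fBarCrystal lam T = none) : fBarCrystal lam V = none := by
  by_contra hV
  obtain ⟨W, hW⟩ := Option.ne_none_iff_exists'.mp hV
  obtain ⟨xy, hxy⟩ := exists_swapRel_of_fBarCrystal_eq_some (hTV.zero_notMem h0) hW
  rw [(hxy.transport_right hTV.symm).fBarCrystal_eq] at hT
  exact Option.some_ne_none _ hT

variable {F : (ℕ × ℕ → Finset ℕ) → Option (ℕ × ℕ → Finset ℕ)}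

lemma bind_eBarCrystal_comm
    (hrel : ∀ xy T T', SwapRel lam xy T T' → Option.Rel (SwapRel lam xy) (F T) (F T'))
    (hsmall : ∀ T V, F T = some V → SameSmallLetters T V) (h0 : ∀ b ∈ revrowBoxes lam, 0 ∉ T b) :
    (F T).bind (eBarCrystal lam) = (eBarCrystal lam T).bind F := by
  cases hbar : eBarCrystal lam T with
  | none =>
    cases hF : F T with
    | none => rfl
    | some V => exact eBarCrystal_eq_none_of_sameSmallLetters h0 (hsmall T V hF) hbar
  | some U =>
    obtain ⟨xy, hU⟩ := exists_swapRel_of_eBarCrystal_eq_some h0 hbar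
    have hFU := hrel xy T U hU
    rw [Option.bind_some]
    generalize F T = x, F U = y at hFU ⊢
    cases hFU with
    | none => rfl
    | some hVV' => exact hVV'.eBarCrystal_eq

lemma bind_fBarCrystal_comm
    (hrel : ∀ xy T T', SwapRel lam xy T T' → Option.Rel (SwapRel lam xy) (F T) (F T'))
    (hsmall : ∀ T V, F T = some V → SameSmallLetters T V) (h0 : ∀ b ∈ revrowBoxes lam, 0 ∉ T b) :
    (F T).bind (fBarCrystal lam) = (fBarCrystal lam T).bind F := by
  cases hbar : fBarCrystal lam T with
  | none =>
    cases hF : F T with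
    | none => rfl
    | some V => exact fBarCrystal_eq_none_of_sameSmallLetters h0 (hsmall T V hF) hbar
  | some U =>
    obtain ⟨xy, hU⟩ := exists_swapRel_of_fBarCrystal_eq_some h0 hbar
    have hFU := hrel xy U T hU
    rw [Option.bind_some]
    generalize F U = x, F T = y at hFU ⊢
    cases hFU with
    | none => rfl
    | some hVV' => exact hVV'.fBarCrystal_eq

end Commutation

theorem stmt9_general (n : ℕ) (hn : 2 ≤ n) (lam : List ℕ) :
    -- `e_1̄`, `f_1̄` map `SetDecTab_n(λ)` into `SetDecTab_n(λ) ⊔ {0}`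
    (∀ T, IsSetDecompTabN n lam T →
      (∀ U, eBarCrystal lam T = some U → IsSetDecompTabN n lam U) ∧
      (∀ U, fBarCrystal lam T = some U → IsSetDecompTabN n lam U)) ∧
    -- they commute with `e_i`, `f_i` for all `3 ≤ i ≤ n-1`
    (∀ i, 3 ≤ i → i < n → ∀ T, IsSetDecompTabN n lam T →
      (eCrystal lam i T).bind (eBarCrystal lam) =
        (eBarCrystal lam T).bind (eCrystal lam i) ∧
      (fCrystal lam i T).bind (eBarCrystal lam) =
        (eBarCrystal lam T).bind (fCrystal lam i) ∧
      (eCrystal lam i T).bind (fBarCrystal lam) =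
        (fBarCrystal lam T).bind (eCrystal lam i) ∧
      (fCrystal lam i T).bind (fBarCrystal lam) =
        (fBarCrystal lam T).bind (fCrystal lam i)) ∧
    -- and preserve the string lengths `ε_i`, `φ_i` for all `3 ≤ i ≤ n-1`
    (∀ i, 3 ≤ i → i < n → ∀ T U, IsSetDecompTabN n lam T →
      (eBarCrystal lam T = some U ∨ fBarCrystal lam T = some U) →
      (∀ m, HasStringLen (eCrystal lam i) T m ↔ HasStringLen (eCrystal lam i) U m) ∧
      (∀ m, HasStringLen (fCrystal lam i) T m ↔ HasStringLen (fCrystal lam i) U m)) ∧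
    -- `e_1̄(T) = U` iff `f_1̄(U) = T`
    (∀ T U, IsSetDecompTabN n lam T → IsSetDecompTabN n lam U →
      (eBarCrystal lam T = some U ↔ fBarCrystal lam U = some T)) ∧
    -- in which case `wt(U) = wt(T) + 𝐞_1 - 𝐞_2`
    (∀ T U, IsSetDecompTabN n lam T → eBarCrystal lam T = some U →
      ∀ k, (wtSet lam U k : ℤ) - wtSet lam T k =
        (if k = 1 then 1 else 0) - (if k = 2 then 1 else 0)) := by
  refine ⟨fun T hT => ⟨fun U hU => ?_, fun U hU => ?_⟩, fun i hi _ T hT => ?_,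
    fun i hi _ T U hT hTU => ?_, fun T U hT hU => ?_, fun T U hT hTU => ?_⟩
  · obtain ⟨xy, h⟩ := exists_swapRel_of_eBarCrystal_eq_some hT.zero_notMem hU
    exact (h.isSetDecompTabN_iff hn).mp hT
  · obtain ⟨xy, h⟩ := exists_swapRel_of_fBarCrystal_eq_some hT.zero_notMem hU
    exact (h.isSetDecompTabN_iff hn).mpr hT
  · have he := fun xy T T' (h : SwapRel lam xy T T') => h.rel_eCrystal hi
    have hf := fun xy T T' (h : SwapRel lam xy T T') => h.rel_fCrystal hi
    have hes := fun T V (h : eCrystal lam i T = some V) => sameSmallLetters_of_eCrystal_eq_some hi h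
    have hfs := fun T V (h : fCrystal lam i T = some V) => sameSmallLetters_of_fCrystal_eq_some hi h
    exact ⟨bind_eBarCrystal_comm he hes hT.zero_notMem, bind_eBarCrystal_comm hf hfs hT.zero_notMem,
      bind_fBarCrystal_comm he hes hT.zero_notMem, bind_fBarCrystal_comm hf hfs hT.zero_notMem⟩
  · rcases hTU with hTU | hTU
    · obtain ⟨xy, h⟩ := exists_swapRel_of_eBarCrystal_eq_some hT.zero_notMem hTU
      exact ⟨h.hasStringLen_eCrystal_iff hi, h.hasStringLen_fCrystal_iff hi⟩
    · obtain ⟨xy, h⟩ := exists_swapRel_of_fBarCrystal_eq_some hT.zero_notMem hTU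
      exact ⟨fun m => (h.hasStringLen_eCrystal_iff hi m).symm,
        fun m => (h.hasStringLen_fCrystal_iff hi m).symm⟩
  · exact (eBarCrystal_eq_some_iff hT.zero_notMem).trans
      (fBarCrystal_eq_some_iff hU.zero_notMem).symm
  · obtain ⟨xy, h⟩ := exists_swapRel_of_eBarCrystal_eq_some hT.zero_notMem hTU
    exact h.wtSet_sub

/-- Theorem 3.2 of the paper, queer part: the seminormal
`gl_n`-crystal `SetDecTab_n(λ)` together with `e_1̄, f_1̄` is a `q_n`-crystal. -/
theorem stmt9 (n : ℕ) (hn : 2 ≤ n) (lam : List ℕ) (hlam : IsStrictPartition lam)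
    (hlen : lam.length ≤ n) :
    -- `e_1̄`, `f_1̄` map `SetDecTab_n(λ)` into `SetDecTab_n(λ) ⊔ {0}`
    (∀ T, IsSetDecompTabN n lam T →
      (∀ U, eBarCrystal lam T = some U → IsSetDecompTabN n lam U) ∧
      (∀ U, fBarCrystal lam T = some U → IsSetDecompTabN n lam U)) ∧
    -- they commute with `e_i`, `f_i` for all `3 ≤ i ≤ n-1`
    (∀ i, 3 ≤ i → i < n → ∀ T, IsSetDecompTabN n lam T →
      (eCrystal lam i T).bind (eBarCrystal lam) =
        (eBarCrystal lam T).bind (eCrystal lam i) ∧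
      (fCrystal lam i T).bind (eBarCrystal lam) =
        (eBarCrystal lam T).bind (fCrystal lam i) ∧
      (eCrystal lam i T).bind (fBarCrystal lam) =
        (fBarCrystal lam T).bind (eCrystal lam i) ∧
      (fCrystal lam i T).bind (fBarCrystal lam) =
        (fBarCrystal lam T).bind (fCrystal lam i)) ∧
    -- and preserve the string lengths `ε_i`, `φ_i` for all `3 ≤ i ≤ n-1`
    (∀ i, 3 ≤ i → i < n → ∀ T U, IsSetDecompTabN n lam T →
      (eBarCrystal lam T = some U ∨ fBarCrystal lam T = some U) →
      (∀ m, HasStringLen (eCrystal lam i) T m ↔ HasStringLen (eCrystal lam i) U m) ∧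
      (∀ m, HasStringLen (fCrystal lam i) T m ↔ HasStringLen (fCrystal lam i) U m)) ∧
    -- `e_1̄(T) = U` iff `f_1̄(U) = T`
    (∀ T U, IsSetDecompTabN n lam T → IsSetDecompTabN n lam U →
      (eBarCrystal lam T = some U ↔ fBarCrystal lam U = some T)) ∧
    -- in which case `wt(U) = wt(T) + 𝐞_1 - 𝐞_2`
    (∀ T U, IsSetDecompTabN n lam T → eBarCrystal lam T = some U →
      ∀ k, (wtSet lam U k : ℤ) - wtSet lam T k =
        (if k = 1 then 1 else 0) - (if k = 2 then 1 else 0)) :=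
  stmt9_general n hn lam
end
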